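/- arXiv:2503.16878 — 11 statements merged into one kernel-verified Lean document; each statement's English description precedes it below -/
import Mathlib

section
/- For every real number $\lambda$ with $0 < \lambda < 1$ and every integer $n \ge 1$, $\int_0^\infty \prod_{k=0}^{n} (1 + t^2 \lambda^k)^{-1} \, dt = \frac{\pi}{2} \prod_{k=0}^{n-1} \frac{1 - \lambda^{k+1/2}}{1 - \lambda^{k+1}}$. -/
/-!
Write `I n` for the integral over `(0, ∞)` of `∏_{k ≤ n} (1 + t² λ^k)⁻¹`. The partial fraction
identity `(1 - q) / ((1 + x)(1 + q x)) = 1 / (1 + x) - q / (1 + q x)`, applied to the first and the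
last factor, writes the integrand of `I (n + 1)` as a combination of that of `I n` and of its
shift `k ↦ k + 1`. The substitution `t ↦ √λ t` turns the shifted integral into `λ^{-1/2} I n`, so
`(1 - λ^{n+1}) I (n + 1) = (1 - λ^{n+1/2}) I n`, and induction from `I 0 = π / 2` gives the formula.
-/

open MeasureTheory Real Finset

lemma integrable_inv_one_add_sq_mul {a : ℝ} (ha : 0 < a) :
    Integrable (fun t : ℝ => (1 + t ^ 2 * a)⁻¹) := by
  convert integrable_inv_one_add_sq.comp_mul_left' (sqrt_pos.mpr ha).ne' using 3 with t
  rw [mul_pow, sq_sqrt ha.le, mul_comm]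

lemma norm_inv_one_add_sq_mul_le_one {a : ℝ} (ha : 0 ≤ a) (t : ℝ) :
    ‖(1 + t ^ 2 * a)⁻¹‖ ≤ 1 := by
  rw [norm_inv, inv_le_one₀ (norm_pos_iff.mpr (by positivity)), Real.norm_of_nonneg (by positivity)]
  nlinarith [sq_nonneg t]

lemma integrable_prod_inv_one_add_sq_mul {a : ℕ → ℝ} (ha : ∀ k, 0 < a k) {n : ℕ} (hn : n ≠ 0) :
    Integrable (fun t : ℝ => ∏ k ∈ range n, (1 + t ^ 2 * a k)⁻¹) := by
  obtain ⟨m, rfl⟩ := Nat.exists_eq_succ_of_ne_zero hn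
  simp_rw [prod_range_succ']
  refine (integrable_inv_one_add_sq_mul (ha 0)).bdd_mul (c := 1) (by fun_prop) ?_
  filter_upwards with t
  rw [norm_prod]
  exact prod_le_one (fun _ _ => norm_nonneg _)
    fun k _ => norm_inv_one_add_sq_mul_le_one (ha (k + 1)).le t

lemma sub_mul_prod_inv_one_add_sq_mul (a : ℕ → ℝ) (m : ℕ) {t : ℝ}
    (h0 : 1 + t ^ 2 * a 0 ≠ 0) (hm : 1 + t ^ 2 * a (m + 1) ≠ 0) :
    (a 0 - a (m + 1)) * ∏ k ∈ range (m + 2), (1 + t ^ 2 * a k)⁻¹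
      = a 0 * ∏ k ∈ range (m + 1), (1 + t ^ 2 * a k)⁻¹
        - a (m + 1) * ∏ k ∈ range (m + 1), (1 + t ^ 2 * a (k + 1))⁻¹ := by
  rw [prod_range_succ, prod_range_succ', prod_range_succ (fun k => (1 + t ^ 2 * a (k + 1))⁻¹)]
  rw [show a 0 - a (m + 1) = a 0 * (1 + t ^ 2 * a (m + 1)) - a (m + 1) * (1 + t ^ 2 * a 0) by ring]
  generalize 1 + t ^ 2 * a 0 = x at *
  generalize 1 + t ^ 2 * a (m + 1) = y at *
  field_simp

lemma integral_Ioi_prod_inv_one_add_sq_mul_pow_succ {l : ℝ} (hl : 0 < l) (m : ℕ) :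
    ∫ t in Set.Ioi (0 : ℝ), ∏ k ∈ range m, (1 + t ^ 2 * l ^ (k + 1))⁻¹
      = (√l)⁻¹ * ∫ t in Set.Ioi (0 : ℝ), ∏ k ∈ range m, (1 + t ^ 2 * l ^ k)⁻¹ := by
  have h := integral_comp_mul_left_Ioi (fun t => ∏ k ∈ range m, (1 + t ^ 2 * l ^ k)⁻¹) 0
    (sqrt_pos.mpr hl)
  rw [mul_zero, smul_eq_mul] at h
  rw [← h]
  congr with t
  refine prod_congr rfl fun k _ => ?_
  rw [mul_pow, sq_sqrt hl.le, pow_succ]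
  ring

lemma integral_Ioi_prod_inv_one_add_sq_mul_pow_recurrence {l : ℝ} (hl0 : 0 < l) (hl1 : l < 1)
    (n : ℕ) :
    ∫ t in Set.Ioi (0 : ℝ), ∏ k ∈ range (n + 2), (1 + t ^ 2 * l ^ k)⁻¹
      = (1 - l ^ ((n : ℝ) + 1 / 2)) / (1 - l ^ (n + 1))
        * ∫ t in Set.Ioi (0 : ℝ), ∏ k ∈ range (n + 1), (1 + t ^ 2 * l ^ k)⁻¹ := by
  have hq : 1 - l ^ (n + 1) ≠ 0 := (sub_pos.mpr (pow_lt_one₀ hl0.le hl1 n.succ_ne_zero)).ne'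
  have hint : ∀ a : ℕ → ℝ, (∀ k, 0 < a k) →
      IntegrableOn (fun t : ℝ => ∏ k ∈ range (n + 1), (1 + t ^ 2 * a k)⁻¹) (Set.Ioi 0) :=
    fun a ha => (integrable_prod_inv_one_add_sq_mul ha n.succ_ne_zero).integrableOn
  have hpf : ∀ t : ℝ, (1 - l ^ (n + 1)) * ∏ k ∈ range (n + 2), (1 + t ^ 2 * l ^ k)⁻¹
      = ∏ k ∈ range (n + 1), (1 + t ^ 2 * l ^ k)⁻¹
        - l ^ (n + 1) * ∏ k ∈ range (n + 1), (1 + t ^ 2 * l ^ (k + 1))⁻¹ := fun t => by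
    simpa only [pow_zero, one_mul] using
      sub_mul_prod_inv_one_add_sq_mul (fun k => l ^ k) n (t := t) (by positivity) (by positivity)
  have hrec :
      (1 - l ^ (n + 1)) * ∫ t in Set.Ioi (0 : ℝ), ∏ k ∈ range (n + 2), (1 + t ^ 2 * l ^ k)⁻¹
      = (1 - l ^ (n + 1) * (√l)⁻¹)
        * ∫ t in Set.Ioi (0 : ℝ), ∏ k ∈ range (n + 1), (1 + t ^ 2 * l ^ k)⁻¹ := by
    rw [← integral_const_mul, integral_congr_ae (Filter.Eventually.of_forall hpf),
      integral_sub (hint _ fun k => pow_pos hl0 k)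
        ((hint _ fun k => pow_pos hl0 (k + 1)).const_mul _),
      integral_const_mul, integral_Ioi_prod_inv_one_add_sq_mul_pow_succ hl0]
    ring
  have hhalf : l ^ (n + 1) * (√l)⁻¹ = l ^ ((n : ℝ) + 1 / 2) := by
    rw [rpow_add hl0, rpow_natCast, ← sqrt_eq_rpow, pow_succ]
    field_simp
    rw [sq_sqrt hl0.le]
  rw [div_mul_eq_mul_div, eq_div_iff hq, mul_comm, hrec, hhalf]

theorem stmt_0_general (l : ℝ) (hl0 : 0 < l) (hl1 : l < 1) (n : ℕ) :
    ∫ t in Set.Ioi (0:ℝ), ∏ k ∈ Finset.range (n+1), (1 + t^2 * l^k)⁻¹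
      = (Real.pi / 2) * ∏ k ∈ Finset.range n,
          (1 - l ^ ((k : ℝ) + 1/2)) / (1 - l ^ (k+1)) := by
  induction n with
  | zero => simp [integral_Ioi_inv_one_add_sq]
  | succ n ih =>
    rw [integral_Ioi_prod_inv_one_add_sq_mul_pow_recurrence hl0 hl1, ih, prod_range_succ]
    ring

theorem stmt_0 (l : ℝ) (hl0 : 0 < l) (hl1 : l < 1) (n : ℕ) (hn : 1 ≤ n) :
    ∫ t in Set.Ioi (0:ℝ), ∏ k ∈ Finset.range (n+1), (1 + t^2 * l^k)⁻¹
      = (Real.pi / 2) * ∏ k ∈ Finset.range n,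
          (1 - l ^ ((k : ℝ) + 1/2)) / (1 - l ^ (k+1)) :=
  stmt_0_general l hl0 hl1 n
end

section
/- For every real number $\lambda$ with $0 < \lambda < 1$ and every integer $n \ge 1$, $\int_0^\infty \prod_{k=0}^{n} (1 + t \lambda^k)^{-1} \, dt = \frac{\log(\lambda^{-1})}{1 - \lambda^{n}}$. -/
/-! Write `P_n(t) = ∏_{k=0}^{n} (1 + t l^k)⁻¹` (`geomProdInv l n t`). The substitution
`t ↦ l t` shifts the range of `k` to `1 ≤ k ≤ n + 1`, so splitting off the first, resp. the last,
factor of `P_{n+1}` gives the pointwise relation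
`(l^{n+1} - 1) P_{n+1}(t) = l^{n+1} P_n(l t) - P_n(t)`, and integrating it shows that
`(1 - l^n) ∫ P_n` does not depend on `n`. For `n = 1` the integrand has the explicit antiderivative
`(log (1 + t) - log (1 + l t)) / (1 - l)`, which tends to `log l⁻¹ / (1 - l)`. -/

open MeasureTheory Real Finset Filter Topology

section TwoFactors

variable {a b : ℝ}

lemma tendsto_log_one_add_mul_sub_log (ha : 0 < a) :
    Tendsto (fun t => log (1 + t * a) - log t) atTop (𝓝 (log a)) := by
  have hlim : Tendsto (fun t : ℝ => log (t⁻¹ + a)) atTop (𝓝 (log a)) := by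
    have hinv : Tendsto (fun t : ℝ => t⁻¹ + a) atTop (𝓝 a) := by
      simpa using tendsto_inv_atTop_zero.add_const a
    exact ((continuousAt_log ha.ne').tendsto).comp hinv
  refine hlim.congr' ?_
  filter_upwards [eventually_gt_atTop (0 : ℝ)] with t ht
  rw [eq_sub_iff_add_eq, ← log_mul (by positivity) ht.ne']
  congr 1
  field_simp

lemma hasDerivAt_log_one_add_mul_sub_div (ha : 0 ≤ a) (hb : 0 ≤ b) (hab : a ≠ b)
    {t : ℝ} (ht : 0 ≤ t) :
    HasDerivAt (fun t => (log (1 + t * a) - log (1 + t * b)) / (a - b))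
      ((1 + t * a)⁻¹ * (1 + t * b)⁻¹) t := by
  have hta : 0 < 1 + t * a := by positivity
  have htb : 0 < 1 + t * b := by positivity
  have hderiv (c : ℝ) : HasDerivAt (fun t : ℝ => 1 + t * c) c t := by
    simpa using ((hasDerivAt_id t).mul_const c).const_add 1
  have h : HasDerivAt (fun t => (log (1 + t * a) - log (1 + t * b)) / (a - b))
      ((a / (1 + t * a) - b / (1 + t * b)) / (a - b)) t :=
    (((hderiv a).log hta.ne').sub ((hderiv b).log htb.ne')).div_const (a - b)
  convert h using 1
  field_simp [sub_ne_zero.2 hab]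
  ring

lemma tendsto_log_one_add_mul_sub_div (ha : 0 < a) (hb : 0 < b) :
    Tendsto (fun t => (log (1 + t * a) - log (1 + t * b)) / (a - b)) atTop
      (𝓝 ((log a - log b) / (a - b))) := by
  simpa using ((tendsto_log_one_add_mul_sub_log ha).sub
    (tendsto_log_one_add_mul_sub_log hb)).div_const (a - b)

lemma integrableOn_inv_one_add_mul_mul_inv (ha : 0 < a) (hb : 0 < b) (hab : a ≠ b) :
    IntegrableOn (fun t => (1 + t * a)⁻¹ * (1 + t * b)⁻¹) (Set.Ioi 0) :=
  integrableOn_Ioi_deriv_of_nonneg'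
    (fun _ ht => hasDerivAt_log_one_add_mul_sub_div ha.le hb.le hab ht)
    (fun t ht => by have : 0 < t := ht; positivity) (tendsto_log_one_add_mul_sub_div ha hb)

lemma integral_inv_one_add_mul_mul_inv (ha : 0 < a) (hb : 0 < b) (hab : a ≠ b) :
    ∫ t in Set.Ioi 0, (1 + t * a)⁻¹ * (1 + t * b)⁻¹ = (log a - log b) / (a - b) := by
  rw [integral_Ioi_of_hasDerivAt_of_nonneg'
    (fun _ ht => hasDerivAt_log_one_add_mul_sub_div ha.le hb.le hab ht)
    (fun t ht => by have : 0 < t := ht; positivity) (tendsto_log_one_add_mul_sub_div ha hb)]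
  simp

end TwoFactors

noncomputable def geomProdInv (l : ℝ) (n : ℕ) (t : ℝ) : ℝ := ∏ k ∈ range (n + 1), (1 + t * l ^ k)⁻¹

namespace geomProdInv

variable {l t : ℝ}

lemma measurable (l : ℝ) (n : ℕ) : Measurable (geomProdInv l n) := by
  unfold geomProdInv
  fun_prop

lemma nonneg (hl : 0 ≤ l) (n : ℕ) (ht : 0 ≤ t) : 0 ≤ geomProdInv l n t :=
  prod_nonneg fun _ _ => by positivity

lemma succ (l : ℝ) (n : ℕ) (t : ℝ) :
    geomProdInv l (n + 1) t = geomProdInv l n t * (1 + t * l ^ (n + 1))⁻¹ :=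
  prod_range_succ _ _

lemma succ' (l : ℝ) (n : ℕ) (t : ℝ) :
    geomProdInv l (n + 1) t = (1 + t)⁻¹ * geomProdInv l n (l * t) := by
  simp only [geomProdInv, prod_range_succ' _ (n + 1), pow_succ, pow_zero, mul_one]
  rw [mul_comm]
  congr 1
  exact prod_congr rfl fun _ _ => by ring_nf

lemma one (l t : ℝ) : geomProdInv l 1 t = (1 + t * 1)⁻¹ * (1 + t * l)⁻¹ := by
  simp [geomProdInv, prod_range_succ, mul_comm]

lemma antitone (hl : 0 ≤ l) (ht : 0 ≤ t) : Antitone (geomProdInv l · t) := by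
  refine antitone_nat_of_succ_le fun n => ?_
  rw [succ]
  exact mul_le_of_le_one_right (nonneg hl n ht) (inv_le_one_of_one_le₀ (by
    simp only [le_add_iff_nonneg_right]; positivity))

lemma sub_one_mul_succ (hl : 0 ≤ l) (n : ℕ) (ht : 0 ≤ t) :
    (l ^ (n + 1) - 1) * geomProdInv l (n + 1) t
      = l ^ (n + 1) * geomProdInv l n (l * t) - geomProdInv l n t := by
  have h₁ : geomProdInv l n (l * t) = (1 + t) * geomProdInv l (n + 1) t := by
    rw [succ', ← mul_assoc, mul_inv_cancel₀ (by positivity), one_mul]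
  have h₂ : geomProdInv l n t = (1 + t * l ^ (n + 1)) * geomProdInv l (n + 1) t := by
    rw [succ, mul_comm, mul_assoc, inv_mul_cancel₀ (by positivity), mul_one]
  rw [h₁, h₂]
  ring

lemma integrableOn (hl₀ : 0 < l) (hl₁ : l ≠ 1) {n : ℕ} (hn : 1 ≤ n) :
    IntegrableOn (geomProdInv l n) (Set.Ioi 0) := by
  refine (integrableOn_inv_one_add_mul_mul_inv one_pos hl₀ hl₁.symm).mono'
    (measurable l n).aestronglyMeasurable ?_
  filter_upwards [ae_restrict_mem measurableSet_Ioi] with t (ht : 0 < t)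
  rw [norm_of_nonneg (nonneg hl₀.le n ht.le), ← one]
  exact antitone hl₀.le ht.le hn

lemma integral_comp_mul_left (hl₀ : 0 < l) (n : ℕ) :
    ∫ t in Set.Ioi 0, geomProdInv l n (l * t) = l⁻¹ * ∫ t in Set.Ioi 0, geomProdInv l n t := by
  rw [integral_comp_mul_left_Ioi _ 0 hl₀, mul_zero, smul_eq_mul]

lemma one_sub_pow_mul_integral_succ (hl₀ : 0 < l) (hl₁ : l ≠ 1) {n : ℕ} (hn : 1 ≤ n) :
    (1 - l ^ (n + 1)) * ∫ t in Set.Ioi 0, geomProdInv l (n + 1) t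
      = (1 - l ^ n) * ∫ t in Set.Ioi 0, geomProdInv l n t := by
  have hint := integrableOn hl₀ hl₁ hn
  have hint_comp : IntegrableOn (fun t => geomProdInv l n (l * t)) (Set.Ioi 0) := by
    rwa [integrableOn_Ioi_comp_mul_left_iff _ 0 hl₀, mul_zero]
  rw [← neg_sub, neg_mul, ← integral_const_mul,
    setIntegral_congr_fun measurableSet_Ioi fun t (ht : 0 < t) => sub_one_mul_succ hl₀.le n ht.le,
    integral_sub (hint_comp.const_mul _) hint, integral_const_mul, integral_comp_mul_left hl₀,
    pow_succ]
  field_simp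
  ring

lemma one_sub_pow_mul_integral (hl₀ : 0 < l) (hl₁ : l ≠ 1) {n : ℕ} (hn : 1 ≤ n) :
    (1 - l ^ n) * ∫ t in Set.Ioi 0, geomProdInv l n t = log l⁻¹ := by
  induction n, hn using Nat.le_induction with
  | base =>
    rw [funext (one l), integral_inv_one_add_mul_mul_inv one_pos hl₀ hl₁.symm, log_one, log_inv,
      pow_one, zero_sub]
    field_simp [sub_ne_zero.2 hl₁.symm]
  | succ n hn ih => rw [one_sub_pow_mul_integral_succ hl₀ hl₁ hn, ih]

end geomProdInv

theorem stmt_1 (l : ℝ) (hl0 : 0 < l) (hl1 : l < 1) (n : ℕ) (hn : 1 ≤ n) :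
    ∫ t in Set.Ioi (0:ℝ), ∏ k ∈ Finset.range (n+1), (1 + t * l^k)⁻¹
      = Real.log l⁻¹ / (1 - l ^ n) := by
  have hpow : l ^ n < 1 := pow_lt_one₀ hl0.le hl1 (by omega)
  rw [eq_div_iff (sub_pos.2 hpow).ne', mul_comm]
  exact geomProdInv.one_sub_pow_mul_integral hl0 hl1.ne hn
end

section
/- For every real number $\lambda$ with $0 < \lambda < 1$, $\int_0^\infty \prod_{k=0}^{\infty} (1 + t \lambda^k)^{-1} \, dt = \log(\lambda^{-1})$. -/
/-!
Writing `F t` for the integrand, splitting off the factor `k = 0` gives `F (λ t) = (1 + t) F t`,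
i.e. `F t = (F (λ t) - F t) / t`. Hence the integral is a Frullani integral, equal to
`log (1 / λ) (F (0⁺) - F (∞)) = log λ⁻¹`, since `F` decreases from `1` to `0`.
-/

open MeasureTheory Real Filter Topology Set Finset

/-- The reciprocal `1 / (-t; q)_∞` of a `q`-Pochhammer symbol. -/
noncomputable def invPochhammer (q t : ℝ) : ℝ := ∏' k : ℕ, (1 + t * q ^ k)⁻¹

namespace invPochhammer

variable {q t : ℝ}

lemma multipliable (hq0 : 0 ≤ q) (hq1 : q < 1) (ht : 0 ≤ t) :
    Multipliable fun k : ℕ ↦ (1 + t * q ^ k)⁻¹ := by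
  refine Real.multipliable_of_summable_log (fun k ↦ by positivity) ?_
  have hsum := (summable_geometric_of_lt_one hq0 hq1).mul_left t
  simpa only [Real.log_inv] using (Real.summable_log_one_add_of_summable hsum).neg

lemma base_mul (hq0 : 0 ≤ q) (hq1 : q < 1) (ht : 0 ≤ t) :
    invPochhammer q (q * t) = (1 + t) * invPochhammer q t := by
  have hshift (k : ℕ) : (1 + q * t * q ^ k)⁻¹ = (1 + t * q ^ (k + 1))⁻¹ := by ring
  have hpos : 1 + t ≠ 0 := by positivity
  rw [invPochhammer, invPochhammer, tprod_eq_zero_mul' (f := fun k ↦ (1 + t * q ^ k)⁻¹)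
    (by simpa only [hshift] using multipliable hq0 hq1 (mul_nonneg hq0 ht)),
    pow_zero, mul_one, ← mul_assoc, mul_inv_cancel₀ hpos, one_mul]
  simp only [hshift]

lemma antitone_prod_range (hq0 : 0 ≤ q) (ht : 0 ≤ t) :
    Antitone fun n ↦ ∏ k ∈ range n, (1 + t * q ^ k)⁻¹ := by
  refine antitone_nat_of_succ_le fun n ↦ ?_
  rw [prod_range_succ]
  refine mul_le_of_le_one_right (prod_nonneg fun k _ ↦ by positivity) ?_
  exact inv_le_one_of_one_le₀ (by nlinarith [pow_nonneg hq0 n])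

lemma tendsto_prod_range (hq0 : 0 ≤ q) (hq1 : q < 1) (ht : 0 ≤ t) :
    Tendsto (fun n ↦ ∏ k ∈ range n, (1 + t * q ^ k)⁻¹) atTop (𝓝 (invPochhammer q t)) :=
  (multipliable hq0 hq1 ht).hasProd.tendsto_prod_nat

lemma le_prod_range (hq0 : 0 ≤ q) (hq1 : q < 1) (ht : 0 ≤ t) (n : ℕ) :
    invPochhammer q t ≤ ∏ k ∈ range n, (1 + t * q ^ k)⁻¹ :=
  (antitone_prod_range hq0 ht).le_of_tendsto (tendsto_prod_range hq0 hq1 ht) n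

lemma nonneg (hq0 : 0 ≤ q) (hq1 : q < 1) (ht : 0 ≤ t) : 0 ≤ invPochhammer q t :=
  ge_of_tendsto' (tendsto_prod_range hq0 hq1 ht) fun n ↦ prod_nonneg fun k _ ↦ by positivity

lemma le_one (hq0 : 0 ≤ q) (hq1 : q < 1) (ht : 0 ≤ t) : invPochhammer q t ≤ 1 := by
  simpa using le_prod_range hq0 hq1 ht 0

lemma le_inv_one_add (hq0 : 0 ≤ q) (hq1 : q < 1) (ht : 0 ≤ t) :
    invPochhammer q t ≤ (1 + t)⁻¹ := by
  simpa using le_prod_range hq0 hq1 ht 1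

lemma le_inv_one_add_sq (hq0 : 0 < q) (hq1 : q < 1) (ht : 0 ≤ t) :
    invPochhammer q t ≤ q⁻¹ * (1 + t ^ 2)⁻¹ := by
  calc invPochhammer q t ≤ ((1 + t) * (1 + t * q))⁻¹ := by
        simpa [prod_range_succ, mul_inv] using le_prod_range hq0.le hq1 ht 2
    _ ≤ (q * (1 + t ^ 2))⁻¹ :=
        inv_anti₀ (by positivity) (by nlinarith [mul_nonneg ht hq0.le])
    _ = q⁻¹ * (1 + t ^ 2)⁻¹ := mul_inv q _

/-- Factorwise `exp (-x) ≤ (1 + x)⁻¹`, and `∑ t q ^ k ≤ t / (1 - q)`. -/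
lemma exp_neg_div_le (hq0 : 0 ≤ q) (hq1 : q < 1) (ht : 0 ≤ t) :
    exp (-(t / (1 - q))) ≤ invPochhammer q t := by
  refine ge_of_tendsto' (tendsto_prod_range hq0 hq1 ht) fun n ↦ ?_
  calc exp (-(t / (1 - q))) ≤ exp (-∑ k ∈ range n, t * q ^ k) := by
        gcongr
        have hgeom : ∑ k ∈ range n, q ^ k ≤ 1 / (1 - q) := by
          simpa only [range_eq_Ico, pow_zero] using
            geom_sum_Ico_le_of_lt_one (m := 0) (n := n) hq0 hq1
        rw [← mul_sum, ← mul_one_div]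
        exact mul_le_mul_of_nonneg_left hgeom ht
    _ = ∏ k ∈ range n, exp (-(t * q ^ k)) := by rw [← sum_neg_distrib, exp_sum]
    _ ≤ ∏ k ∈ range n, (1 + t * q ^ k)⁻¹ := by
        refine prod_le_prod (fun k _ ↦ (exp_pos _).le) fun k _ ↦ ?_
        rw [exp_neg]
        exact inv_anti₀ (by positivity) (by linarith [add_one_le_exp (t * q ^ k)])

lemma tendsto_nhdsGT_zero (hq0 : 0 ≤ q) (hq1 : q < 1) :
    Tendsto (invPochhammer q) (𝓝[>] 0) (𝓝 1) := by
  have hexp : Tendsto (fun t ↦ exp (-(t / (1 - q)))) (𝓝[>] 0) (𝓝 1) := by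
    simpa using ((continuous_id.div_const (1 - q)).neg.rexp.tendsto 0).mono_left
      nhdsWithin_le_nhds
  refine tendsto_of_tendsto_of_tendsto_of_le_of_le' hexp tendsto_const_nhds ?_ ?_ <;>
    filter_upwards [self_mem_nhdsWithin] with t ht
  exacts [exp_neg_div_le hq0 hq1 ht.le, le_one hq0 hq1 ht.le]

lemma tendsto_atTop (hq0 : 0 ≤ q) (hq1 : q < 1) :
    Tendsto (invPochhammer q) atTop (𝓝 0) := by
  have hinv : Tendsto (fun t : ℝ ↦ (1 + t)⁻¹) atTop (𝓝 0) :=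
    tendsto_inv_atTop_zero.comp (tendsto_atTop_add_const_left _ 1 tendsto_id)
  refine squeeze_zero' ?_ ?_ hinv
  all_goals filter_upwards [eventually_ge_atTop 0] with t ht
  exacts [nonneg hq0 hq1 ht, le_inv_one_add hq0 hq1 ht]

lemma integrableOn_Ioi (hq0 : 0 < q) (hq1 : q < 1) :
    IntegrableOn (invPochhammer q) (Ioi 0) := by
  have hmeas : Measurable (invPochhammer q) := by unfold invPochhammer; fun_prop
  refine (integrable_inv_one_add_sq.const_mul q⁻¹).integrableOn.mono'
    hmeas.aestronglyMeasurable ?_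
  filter_upwards [ae_restrict_mem measurableSet_Ioi] with t (ht : 0 < t)
  rw [norm_of_nonneg (nonneg hq0.le hq1 ht.le)]
  exact le_inv_one_add_sq hq0 hq1 ht.le

end invPochhammer

open invPochhammer in
theorem stmt_2 (l : ℝ) (hl0 : 0 < l) (hl1 : l < 1) :
    ∫ t in Set.Ioi (0:ℝ), ∏' k : ℕ, (1 + t * l^k)⁻¹ = Real.log l⁻¹ := by
  have hint := integrableOn_Ioi hl0 hl1
  have hfrullani : ∀ t ∈ Ioi (0:ℝ),
      t⁻¹ • (invPochhammer l (l * t) - invPochhammer l (1 * t)) = invPochhammer l t := by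
    intro t (ht : 0 < t)
    rw [base_mul hl0.le hl1 ht.le, one_mul, smul_eq_mul]
    field_simp
    ring
  calc ∫ t in Ioi 0, invPochhammer l t
      = ∫ t in Ioi 0, t⁻¹ • (invPochhammer l (l * t) - invPochhammer l (1 * t)) :=
        (setIntegral_congr_fun measurableSet_Ioi hfrullani).symm
    _ = log (1 / l) • (1 - 0) :=
        Frullani.integral_Ioi_eq hint.locallyIntegrableOn hl0 one_pos
          (tendsto_nhdsGT_zero hl0.le hl1) (tendsto_atTop hl0.le hl1)
          (hint.congr_fun (fun t ht ↦ (hfrullani t ht).symm) measurableSet_Ioi)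
    _ = log l⁻¹ := by simp
end

section
/- Define $V(\lambda) = \frac{1}{2(1-\lambda)} \int_0^\infty \prod_{k=0}^\infty (1 + t\lambda^k)^{-1/2} \, dt$ for $0 < \lambda < 1$. Then for all such $\lambda$, $\frac{\lambda^{-1}\log(\lambda^{-1})}{\lambda^{-1}-1} \le V(\lambda) \le \frac{\lambda^{-2}\log(\lambda^{-1})}{\lambda^{-1}-1}$. -/
/-!
Write `F_q(t) = ∏_{k ≥ 0} (1 + t qᵏ)⁻¹`. The functional equation `F_q(q t) = (1 + t) F_q(t)` reads
`F_q(t) = (F_q(q t) - F_q(t)) / t`, so `∫_a^b F_q` telescopes into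
`∫_{qa}^a F_q(s) ds / s - ∫_{qb}^b F_q(s) ds / s`. Since `F_q` decreases from `1` to `0`, these edge
integrals tend to `log q⁻¹` and to `0` as `a → 0` and `b → ∞`, whence `∫_0^∞ F_q = log q⁻¹`.

Pairing the factors `k = 2j` and `k = 2j + 1` gives
`F_{q²}(t) ≤ ∏ₖ (1 + t qᵏ)^(-1/2) ≤ F_{q²}(q t)`, and integrating yields
`2 log q⁻¹ ≤ ∫_0^∞ ∏ₖ (1 + t qᵏ)^(-1/2) dt ≤ q⁻¹ · 2 log q⁻¹`.
-/

open MeasureTheory Real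

/-- The volatility multiplier `V(λ)`. -/
noncomputable def Vmult (l : ℝ) : ℝ :=
  (1 / (2 * (1 - l))) * ∫ t in Set.Ioi (0:ℝ), ∏' k : ℕ, (1 + t * l^k) ^ (-(1:ℝ)/2)

open Filter Set Topology intervalIntegral

/-- For `t ≥ 0` this is `log ∏ₖ (1 + t qᵏ)`; truncating `t` at `0` makes it monotone on `ℝ`. -/
noncomputable def logProd (q t : ℝ) : ℝ := ∑' k : ℕ, log (1 + max t 0 * q ^ k)

noncomputable def invProd (q t : ℝ) : ℝ := exp (-logProd q t)

section
variable {q t : ℝ}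

lemma one_le_one_add_max_mul_pow (hq : 0 ≤ q) (t : ℝ) (k : ℕ) : 1 ≤ 1 + max t 0 * q ^ k :=
  le_add_of_nonneg_right (mul_nonneg (le_max_right t 0) (pow_nonneg hq k))

lemma one_add_max_mul_pow_pos (hq : 0 ≤ q) (t : ℝ) (k : ℕ) : 0 < 1 + max t 0 * q ^ k :=
  zero_lt_one.trans_le (one_le_one_add_max_mul_pow hq t k)

lemma summable_log_one_add_max_mul_pow (hq0 : 0 ≤ q) (hq1 : q < 1) (t : ℝ) :
    Summable fun k : ℕ => log (1 + max t 0 * q ^ k) := by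
  refine Summable.of_nonneg_of_le (fun k => log_nonneg (one_le_one_add_max_mul_pow hq0 t k))
    (fun k => ?_) ((summable_geometric_of_lt_one hq0 hq1).mul_left (max t 0))
  linarith [log_le_sub_one_of_pos (one_add_max_mul_pow_pos hq0 t k)]

lemma logProd_nonneg (hq : 0 ≤ q) (t : ℝ) : 0 ≤ logProd q t :=
  tsum_nonneg fun k => log_nonneg (one_le_one_add_max_mul_pow hq t k)

lemma logProd_le (hq0 : 0 ≤ q) (hq1 : q < 1) (t : ℝ) : logProd q t ≤ max t 0 / (1 - q) := by
  have hgeom := (summable_geometric_of_lt_one hq0 hq1).mul_left (max t 0)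
  calc logProd q t ≤ ∑' k : ℕ, max t 0 * q ^ k :=
        (summable_log_one_add_max_mul_pow hq0 hq1 t).tsum_le_tsum
          (fun k => by linarith [log_le_sub_one_of_pos (one_add_max_mul_pow_pos hq0 t k)])
          hgeom
    _ = max t 0 / (1 - q) := by
        rw [tsum_mul_left, tsum_geometric_of_lt_one hq0 hq1, div_eq_mul_inv]

lemma logProd_mono (hq0 : 0 ≤ q) (hq1 : q < 1) : Monotone (logProd q) := fun a b hab =>
  (summable_log_one_add_max_mul_pow hq0 hq1 a).tsum_le_tsum
    (fun k => log_le_log (one_add_max_mul_pow_pos hq0 a k) (by gcongr))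
    (summable_log_one_add_max_mul_pow hq0 hq1 b)

lemma logProd_eq_log_add_logProd_mul (hq0 : 0 ≤ q) (hq1 : q < 1) (ht : 0 ≤ t) :
    logProd q t = log (1 + t) + logProd q (q * t) := by
  rw [logProd, (summable_log_one_add_max_mul_pow hq0 hq1 t).tsum_eq_zero_add, logProd,
    max_eq_left ht, max_eq_left (mul_nonneg hq0 ht), pow_zero, mul_one]
  congr 1
  exact tsum_congr fun k => by rw [pow_succ, mul_comm q t, mul_assoc, mul_comm q]

lemma logProd_eq_logProd_sq_add (hq0 : 0 ≤ q) (hq1 : q < 1) (ht : 0 ≤ t) :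
    logProd q t = logProd (q ^ 2) t + logProd (q ^ 2) (q * t) := by
  have hq2 : q ^ 2 < 1 := by nlinarith
  have heven : ∀ k : ℕ, max t 0 * (q ^ 2) ^ k = max t 0 * q ^ (2 * k) := fun k => by
    rw [pow_mul]
  have hodd : ∀ k : ℕ, max (q * t) 0 * (q ^ 2) ^ k = max t 0 * q ^ (2 * k + 1) := fun k => by
    rw [max_eq_left (mul_nonneg hq0 ht), max_eq_left ht, pow_succ q (2 * k), pow_mul]; ring
  have he := summable_log_one_add_max_mul_pow (sq_nonneg q) hq2 t
  have ho := summable_log_one_add_max_mul_pow (sq_nonneg q) hq2 (q * t)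
  simp only [heven] at he
  simp only [hodd] at ho
  have h := tsum_even_add_odd (f := fun k => log (1 + max t 0 * q ^ k)) he ho
  rw [logProd, logProd, logProd, ← h]
  exact congrArg₂ (· + ·) (tsum_congr fun k => by rw [heven]) (tsum_congr fun k => by rw [hodd])

lemma invProd_pos (q t : ℝ) : 0 < invProd q t := exp_pos _

lemma invProd_le_one (hq : 0 ≤ q) (t : ℝ) : invProd q t ≤ 1 :=
  exp_le_one_iff.2 <| neg_nonpos.2 <| logProd_nonneg hq t

lemma invProd_antitone (hq0 : 0 ≤ q) (hq1 : q < 1) : Antitone (invProd q) := fun _ _ hab =>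
  exp_le_exp.2 <| neg_le_neg <| logProd_mono hq0 hq1 hab

lemma invProd_mul_eq (hq0 : 0 ≤ q) (hq1 : q < 1) (ht : 0 ≤ t) :
    invProd q (q * t) = (1 + t) * invProd q t := by
  rw [invProd, invProd, logProd_eq_log_add_logProd_mul hq0 hq1 ht, neg_add, exp_add,
    exp_neg (log _), exp_log (by linarith), mul_inv_cancel_left₀ (by linarith)]

lemma invProd_le_inv_one_add (hq0 : 0 ≤ q) (hq1 : q < 1) (ht : 0 ≤ t) :
    invProd q t ≤ (1 + t)⁻¹ := by
  have h := invProd_le_one hq0 (q * t)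
  rw [invProd_mul_eq hq0 hq1 ht] at h
  rw [← one_div, le_div_iff₀ (by linarith)]
  linarith

lemma invProd_le_inv_mul_sq (hq0 : 0 < q) (hq1 : q < 1) (ht : 0 ≤ t) :
    invProd q t ≤ q⁻¹ * ((1 + t) ^ 2)⁻¹ := by
  have h := invProd_le_one hq0.le (q * (q * t))
  rw [invProd_mul_eq hq0.le hq1 (by positivity), invProd_mul_eq hq0.le hq1 ht] at h
  have hqt : q * (1 + t) ≤ 1 + q * t := by linarith
  rw [← mul_inv, ← one_div, le_div_iff₀ (by positivity)]
  have hF := invProd_pos q t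
  nlinarith [mul_le_mul_of_nonneg_right hqt (by positivity : 0 ≤ (1 + t) * invProd q t)]

lemma tendsto_invProd_atTop (hq0 : 0 ≤ q) (hq1 : q < 1) :
    Tendsto (invProd q) atTop (𝓝 0) := by
  have h : Tendsto (fun t : ℝ => (1 + t)⁻¹) atTop (𝓝 0) :=
    tendsto_inv_atTop_zero.comp (tendsto_atTop_add_const_left _ 1 tendsto_id)
  refine tendsto_of_tendsto_of_tendsto_of_le_of_le' tendsto_const_nhds h
    (Eventually.of_forall fun t => (invProd_pos q t).le) ?_
  filter_upwards [eventually_ge_atTop 0] with t ht using invProd_le_inv_one_add hq0 hq1 ht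

lemma tendsto_invProd_nhds_zero (hq0 : 0 ≤ q) (hq1 : q < 1) :
    Tendsto (invProd q) (𝓝 0) (𝓝 1) := by
  have hbound : Tendsto (fun t : ℝ => max t 0 / (1 - q)) (𝓝 0) (𝓝 0) := by
    simpa using
      ((continuous_id.max (continuous_const (y := (0 : ℝ)))).div_const (1 - q)).tendsto 0
  have hlog : Tendsto (logProd q) (𝓝 0) (𝓝 0) :=
    tendsto_of_tendsto_of_tendsto_of_le_of_le tendsto_const_nhds hbound
      (logProd_nonneg hq0) (logProd_le hq0 hq1)
  have h := hlog.neg.rexp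
  rwa [neg_zero, exp_zero] at h

lemma integrableOn_invProd (hq0 : 0 < q) (hq1 : q < 1) : IntegrableOn (invProd q) (Ioi 0) := by
  have hint : Integrable (fun t : ℝ => q⁻¹ * (1 + ‖t‖) ^ (-2 : ℝ)) :=
    (integrable_one_add_norm (by norm_num)).const_mul _
  refine hint.integrableOn.mono' (invProd_antitone hq0.le hq1).measurable.aestronglyMeasurable ?_
  refine (ae_restrict_iff' measurableSet_Ioi).2 (Eventually.of_forall fun t (ht : 0 < t) => ?_)
  rw [norm_of_nonneg (invProd_pos q t).le, norm_of_nonneg ht.le, rpow_neg (by linarith),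
    rpow_two]
  exact invProd_le_inv_mul_sq hq0 hq1 ht.le

end

section
variable {G : ℝ → ℝ} {q a b : ℝ}

lemma intervalIntegrable_div_of_antitone (hG : Antitone G) (ha : 0 < a) (hb : 0 < b) :
    IntervalIntegrable (fun s => G s / s) volume a b := by
  refine hG.intervalIntegrable.mul_continuousOn (continuousOn_inv₀.mono fun s hs => ?_)
  exact (lt_of_lt_of_le (lt_min ha hb) hs.1).ne'

lemma integral_inv_eq_log_inv (hq : 0 < q) (ha : 0 < a) : ∫ s in q * a..a, s⁻¹ = log q⁻¹ := by
  rw [integral_inv_of_pos (by positivity) ha, div_mul_cancel_right₀ ha.ne']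

lemma mul_log_inv_le_integral_div (hG : Antitone G) (hq0 : 0 < q) (hq1 : q ≤ 1) (ha : 0 < a) :
    G a * log q⁻¹ ≤ ∫ s in q * a..a, G s / s := by
  rw [← integral_inv_eq_log_inv hq0 ha, ← intervalIntegral.integral_const_mul]
  refine integral_mono_on (mul_le_of_le_one_left ha.le hq1)
    ((intervalIntegrable_inv_iff.2 (.inr (notMem_uIcc_of_lt (by positivity) ha))).const_mul _)
    (intervalIntegrable_div_of_antitone hG (by positivity) ha) fun s hs => ?_
  have hqa : 0 ≤ q * a := by positivity
  rw [div_eq_mul_inv]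
  exact mul_le_mul_of_nonneg_right (hG hs.2) (inv_nonneg.2 (hqa.trans hs.1))

lemma integral_div_le_mul_log_inv (hG : Antitone G) (hq0 : 0 < q) (hq1 : q ≤ 1) (ha : 0 < a) :
    ∫ s in q * a..a, G s / s ≤ G (q * a) * log q⁻¹ := by
  rw [← integral_inv_eq_log_inv hq0 ha, ← intervalIntegral.integral_const_mul]
  refine integral_mono_on (mul_le_of_le_one_left ha.le hq1)
    (intervalIntegrable_div_of_antitone hG (by positivity) ha)
    ((intervalIntegrable_inv_iff.2 (.inr (notMem_uIcc_of_lt (by positivity) ha))).const_mul _)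
    fun s hs => ?_
  have hqa : 0 ≤ q * a := by positivity
  rw [div_eq_mul_inv]
  exact mul_le_mul_of_nonneg_right (hG hs.1) (inv_nonneg.2 (hqa.trans hs.1))

lemma integral_eq_sub_integral_div (hG : Antitone G) (hq : 0 < q)
    (hfun : ∀ t, 0 < t → G (q * t) = (1 + t) * G t) (ha : 0 < a) (hb : 0 < b) :
    ∫ t in a..b, G t = (∫ s in q * a..a, G s / s) - ∫ s in q * b..b, G s / s := by
  have hdiv : ∀ {x y}, 0 < x → 0 < y → IntervalIntegrable (fun s => G s / s) volume x y :=
    intervalIntegrable_div_of_antitone hG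
  have hGq : Antitone fun t => G (q * t) := hG.comp_monotone (monotone_mul_left_of_nonneg hq.le)
  calc ∫ t in a..b, G t = ∫ t in a..b, (G (q * t) / t - G t / t) := by
        refine integral_congr fun t ht => ?_
        have ht0 : 0 < t := lt_of_lt_of_le (lt_min ha hb) ht.1
        rw [hfun t ht0]
        field_simp
        ring
    _ = (∫ t in a..b, G (q * t) / t) - ∫ t in a..b, G t / t :=
        integral_sub (intervalIntegrable_div_of_antitone hGq ha hb) (hdiv ha hb)
    _ = (∫ s in q * a..q * b, G s / s) - ∫ s in a..b, G s / s := by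
        congr 1
        calc ∫ t in a..b, G (q * t) / t = ∫ t in a..b, q * (G (q * t) / (q * t)) :=
              integral_congr fun t _ => by rw [mul_div_assoc', mul_div_mul_left _ _ hq.ne']
          _ = ∫ s in q * a..q * b, G s / s := by
              rw [intervalIntegral.integral_const_mul, ← smul_eq_mul,
                smul_integral_comp_mul_left (fun s => G s / s)]
    _ = _ := integral_interval_sub_interval_comm (hdiv (by positivity) (by positivity))
        (hdiv ha hb) (hdiv (by positivity) ha)

lemma tendsto_integral_div_of_antitone {ι : Type*} {l : Filter ι} {c : ℝ} {r : ι → ℝ}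
    (hG : Antitone G) (hq0 : 0 < q) (hq1 : q ≤ 1) (hr : ∀ᶠ i in l, 0 < r i)
    (hGr : Tendsto (fun i => G (r i)) l (𝓝 c)) (hGqr : Tendsto (fun i => G (q * r i)) l (𝓝 c)) :
    Tendsto (fun i => ∫ s in q * r i..r i, G s / s) l (𝓝 (c * log q⁻¹)) :=
  tendsto_of_tendsto_of_tendsto_of_le_of_le' (hGr.mul_const _) (hGqr.mul_const _)
    (hr.mono fun _ hi => mul_log_inv_le_integral_div hG hq0 hq1 hi)
    (hr.mono fun _ hi => integral_div_le_mul_log_inv hG hq0 hq1 hi)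

end

theorem integral_invProd {q : ℝ} (hq0 : 0 < q) (hq1 : q < 1) :
    ∫ t in Ioi 0, invProd q t = log q⁻¹ := by
  have hF := invProd_antitone hq0.le hq1
  have hcover : AECover (volume.restrict (Ioi 0)) atTop fun A : ℝ => Ioc A⁻¹ A :=
    (aecover_Ioi_of_Ioi tendsto_inv_atTop_zero).inter (aecover_Iic tendsto_id)
  have hsmall : Tendsto (fun A : ℝ => ∫ s in q * A⁻¹..A⁻¹, invProd q s / s) atTop
      (𝓝 (1 * log q⁻¹)) := by
    have h0 := tendsto_invProd_nhds_zero hq0.le hq1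
    refine tendsto_integral_div_of_antitone hF hq0 hq1.le ?_ (h0.comp tendsto_inv_atTop_zero)
      (h0.comp (by simpa using tendsto_inv_atTop_zero.const_mul q))
    filter_upwards [eventually_gt_atTop 0] with A hA using inv_pos.2 hA
  have hlarge : Tendsto (fun A : ℝ => ∫ s in q * A..A, invProd q s / s) atTop
      (𝓝 (0 * log q⁻¹)) :=
    tendsto_integral_div_of_antitone hF hq0 hq1.le (eventually_gt_atTop 0)
      (tendsto_invProd_atTop hq0.le hq1)
      ((tendsto_invProd_atTop hq0.le hq1).comp (tendsto_id.const_mul_atTop hq0))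
  refine hcover.integral_eq_of_tendsto _ (integrableOn_invProd hq0 hq1) ?_
  refine ((hsmall.sub hlarge).congr' ?_).trans (by simp)
  filter_upwards [eventually_ge_atTop 1] with A hA
  have hA0 : 0 < A := by linarith
  rw [Measure.restrict_restrict measurableSet_Ioc,
    inter_eq_left.2 (Ioc_subset_Ioi_self.trans (Ioi_subset_Ioi (inv_pos.2 hA0).le)),
    ← integral_of_le ((inv_le_one_of_one_le₀ hA).trans hA),
    integral_eq_sub_integral_div hF hq0 (fun t ht => invProd_mul_eq hq0.le hq1 ht.le)
      (inv_pos.2 hA0) hA0]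

section
variable {q t : ℝ}

lemma tprod_one_add_mul_pow_rpow (hq0 : 0 ≤ q) (hq1 : q < 1) (ht : 0 ≤ t) (p : ℝ) :
    ∏' k : ℕ, (1 + t * q ^ k) ^ p = exp (p * logProd q t) := by
  have hsum := (summable_log_one_add_max_mul_pow hq0 hq1 t).hasSum.mul_left p
  rw [logProd, ← hsum.rexp.tprod_eq]
  refine tprod_congr fun k => ?_
  have hpos := one_add_max_mul_pow_pos hq0 t k
  rw [max_eq_left ht] at hpos ⊢
  rw [rpow_def_of_pos hpos, mul_comm, Function.comp_apply]

lemma invProd_sq_le_exp_neg_half (hq0 : 0 ≤ q) (hq1 : q < 1) (ht : 0 ≤ t) :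
    invProd (q ^ 2) t ≤ exp (-(1:ℝ)/2 * logProd q t) := by
  have hmono := logProd_mono (sq_nonneg q) (by nlinarith) (mul_le_of_le_one_left ht hq1.le)
  rw [invProd, logProd_eq_logProd_sq_add hq0 hq1 ht]
  exact exp_le_exp.2 (by linarith)

lemma exp_neg_half_le_invProd_sq (hq0 : 0 ≤ q) (hq1 : q < 1) (ht : 0 ≤ t) :
    exp (-(1:ℝ)/2 * logProd q t) ≤ invProd (q ^ 2) (q * t) := by
  have hmono := logProd_mono (sq_nonneg q) (by nlinarith) (mul_le_of_le_one_left ht hq1.le)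
  rw [invProd, logProd_eq_logProd_sq_add hq0 hq1 ht]
  exact exp_le_exp.2 (by linarith)

lemma integrableOn_invProd_comp_mul_left (hq0 : 0 < q) (hq1 : q < 1) {c : ℝ} (hc : 0 < c) :
    IntegrableOn (fun t => invProd q (c * t)) (Ioi 0) := by
  refine (integrableOn_Ioi_comp_mul_left_iff _ 0 hc).2 ?_
  rw [mul_zero]
  exact integrableOn_invProd hq0 hq1

lemma integrableOn_exp_neg_half_logProd (hq0 : 0 < q) (hq1 : q < 1) :
    IntegrableOn (fun t => exp (-(1:ℝ)/2 * logProd q t)) (Ioi 0) := by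
  have hmeas : Measurable fun t => exp (-(1:ℝ)/2 * logProd q t) :=
    continuous_exp.measurable.comp ((logProd_mono hq0.le hq1).measurable.const_mul _)
  refine (integrableOn_invProd_comp_mul_left (pow_pos hq0 2) (by nlinarith) hq0).mono'
    hmeas.aestronglyMeasurable <|
      (ae_restrict_iff' measurableSet_Ioi).2 (Eventually.of_forall fun t (ht : 0 < t) => ?_)
  rw [norm_of_nonneg (exp_pos _).le]
  exact exp_neg_half_le_invProd_sq hq0.le hq1 ht.le

lemma log_inv_sq (q : ℝ) : log (q ^ 2)⁻¹ = 2 * log q⁻¹ := by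
  rw [← inv_pow, log_pow, Nat.cast_ofNat]

lemma two_mul_log_inv_le_integral_exp_neg_half_logProd (hq0 : 0 < q) (hq1 : q < 1) :
    2 * log q⁻¹ ≤ ∫ t in Ioi 0, exp (-(1:ℝ)/2 * logProd q t) := by
  have hq2 : q ^ 2 < 1 := by nlinarith
  rw [← log_inv_sq, ← integral_invProd (pow_pos hq0 2) hq2]
  exact setIntegral_mono_on (integrableOn_invProd (pow_pos hq0 2) hq2)
    (integrableOn_exp_neg_half_logProd hq0 hq1) measurableSet_Ioi fun t (ht : 0 < t) =>
      invProd_sq_le_exp_neg_half hq0.le hq1 ht.le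

lemma integral_exp_neg_half_logProd_le (hq0 : 0 < q) (hq1 : q < 1) :
    ∫ t in Ioi 0, exp (-(1:ℝ)/2 * logProd q t) ≤ q⁻¹ * (2 * log q⁻¹) := by
  have hq2 : q ^ 2 < 1 := by nlinarith
  calc ∫ t in Ioi 0, exp (-(1:ℝ)/2 * logProd q t) ≤ ∫ t in Ioi 0, invProd (q ^ 2) (q * t) :=
        setIntegral_mono_on (integrableOn_exp_neg_half_logProd hq0 hq1)
          (integrableOn_invProd_comp_mul_left (pow_pos hq0 2) hq2 hq0) measurableSet_Ioi
          fun t (ht : 0 < t) => exp_neg_half_le_invProd_sq hq0.le hq1 ht.le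
    _ = q⁻¹ * (2 * log q⁻¹) := by
        rw [integral_comp_mul_left_Ioi _ _ hq0, mul_zero, integral_invProd (pow_pos hq0 2) hq2,
          log_inv_sq, smul_eq_mul]

end

theorem stmt_6 (l : ℝ) (hl0 : 0 < l) (hl1 : l < 1) :
    l⁻¹ * Real.log l⁻¹ / (l⁻¹ - 1) ≤ Vmult l ∧
      Vmult l ≤ l⁻¹^2 * Real.log l⁻¹ / (l⁻¹ - 1) := by
  have hV : Vmult l = (2 * (1 - l))⁻¹ * ∫ t in Ioi 0, exp (-(1:ℝ)/2 * logProd l t) := by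
    rw [Vmult, one_div]
    congr 1
    exact setIntegral_congr_fun measurableSet_Ioi fun t (ht : 0 < t) =>
      tprod_one_add_mul_pow_rpow hl0.le hl1 ht.le _
  have hlower := two_mul_log_inv_le_integral_exp_neg_half_logProd hl0 hl1
  have hupper := integral_exp_neg_half_logProd_le hl0 hl1
  have hc : 0 < (2 * (1 - l))⁻¹ := by
    have : 0 < 1 - l := by linarith
    positivity
  have hden : l⁻¹ - 1 = (1 - l) / l := by field_simp
  rw [hV, hden]
  constructor
  · calc l⁻¹ * log l⁻¹ / ((1 - l) / l) = (2 * (1 - l))⁻¹ * (2 * log l⁻¹) := by field_simp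
      _ ≤ _ := mul_le_mul_of_nonneg_left hlower hc.le
  · calc _ ≤ (2 * (1 - l))⁻¹ * (l⁻¹ * (2 * log l⁻¹)) := mul_le_mul_of_nonneg_left hupper hc.le
      _ = l⁻¹ ^ 2 * log l⁻¹ / ((1 - l) / l) := by field_simp
end

section
/- Define $V(\lambda) = \frac{1}{2(1-\lambda)} \int_0^\infty \prod_{k=0}^\infty (1 + t\lambda^k)^{-1/2} \, dt$. Then $\lim_{\lambda \to 1^-} V(\lambda) = 1$. -/
/-
Write the integrand as `exp (-S(t)/2)` with `S(t) = ∑ log (1 + t λ^k)`. From `log (1 + x) ≤ x` and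
the concavity bound `λ^k log (1 + t) ≤ log (1 + t λ^k)` one gets `log (1 + t) ≤ (1 - λ) S(t) ≤ t`,
so with `a = 1 / (2 (1 - λ))` the integrand lies between `exp (-a t)` and `(1 + t)^(-a)`.
Integrating, `1 ≤ V(λ) ≤ 1 / (2 λ - 1)` for `1/2 < λ < 1`, and both bounds tend to `1`.
-/

open MeasureTheory Real Filter

lemma tprod_rpow_eq_exp_mul_tsum_log {ι : Type*} {f : ι → ℝ} (hf : ∀ i, 0 < f i)
    (hs : Summable fun i => log (f i)) (r : ℝ) :
    ∏' i, f i ^ r = exp (r * ∑' i, log (f i)) := by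
  have hprod := ((hs.hasSum.mul_left r).rexp).tprod_eq
  simp only [Function.comp_def] at hprod
  rw [← hprod]
  exact tprod_congr fun i => by rw [rpow_def_of_pos (hf i), mul_comm]

lemma mul_log_one_add_le_log_one_add_mul {s p : ℝ} (hs : -1 < s) (hp0 : 0 ≤ p) (hp1 : p ≤ 1) :
    p * log (1 + s) ≤ log (1 + p * s) := by
  rw [← log_rpow (by linarith)]
  exact log_le_log (rpow_pos_of_pos (by linarith) p)
    (rpow_one_add_le_one_add_mul_self hs.le hp0 hp1)

section LogSum

variable {l t : ℝ}

lemma summable_log_one_add_mul_pow (hl0 : 0 ≤ l) (hl1 : l < 1) (ht : 0 ≤ t) :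
    Summable fun k : ℕ => log (1 + t * l ^ k) :=
  .of_nonneg_of_le (fun k => log_nonneg (by simp only [le_add_iff_nonneg_right]; positivity))
    (fun k => (log_le_sub_one_of_pos (by positivity)).trans_eq (by ring))
    ((summable_geometric_of_lt_one hl0 hl1).mul_left t)

lemma tsum_log_one_add_mul_pow_le (hl0 : 0 ≤ l) (hl1 : l < 1) (ht : 0 ≤ t) :
    ∑' k : ℕ, log (1 + t * l ^ k) ≤ t * (1 - l)⁻¹ := by
  calc ∑' k : ℕ, log (1 + t * l ^ k)
      ≤ ∑' k : ℕ, t * l ^ k :=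
        Summable.tsum_le_tsum (fun k => (log_le_sub_one_of_pos (by positivity)).trans_eq (by ring))
          (summable_log_one_add_mul_pow hl0 hl1 ht)
          ((summable_geometric_of_lt_one hl0 hl1).mul_left t)
    _ = t * (1 - l)⁻¹ := by rw [tsum_mul_left, tsum_geometric_of_lt_one hl0 hl1]

lemma log_one_add_mul_le_tsum_log (hl0 : 0 ≤ l) (hl1 : l < 1) (ht : 0 ≤ t) :
    log (1 + t) * (1 - l)⁻¹ ≤ ∑' k : ℕ, log (1 + t * l ^ k) := by
  calc log (1 + t) * (1 - l)⁻¹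
      = ∑' k : ℕ, l ^ k * log (1 + t) := by
        rw [tsum_mul_right, tsum_geometric_of_lt_one hl0 hl1, mul_comm]
    _ ≤ ∑' k : ℕ, log (1 + t * l ^ k) :=
        Summable.tsum_le_tsum
          (fun k => (mul_log_one_add_le_log_one_add_mul (by linarith) (pow_nonneg hl0 k)
            (pow_le_one₀ hl0 hl1.le)).trans_eq (by rw [mul_comm]))
          ((summable_geometric_of_lt_one hl0 hl1).mul_right _)
          (summable_log_one_add_mul_pow hl0 hl1 ht)

end LogSum

section Integrand

variable {l t : ℝ}

lemma tprod_eq_exp_tsum_log (hl0 : 0 ≤ l) (hl1 : l < 1) (ht : 0 ≤ t) :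
    ∏' k : ℕ, (1 + t * l ^ k) ^ (-(1:ℝ)/2) = exp (-(1:ℝ)/2 * ∑' k : ℕ, log (1 + t * l ^ k)) :=
  tprod_rpow_eq_exp_mul_tsum_log (fun k => by positivity) (summable_log_one_add_mul_pow hl0 hl1 ht) _

lemma antitoneOn_tprod (hl0 : 0 ≤ l) (hl1 : l < 1) :
    AntitoneOn (fun t : ℝ => ∏' k : ℕ, (1 + t * l ^ k) ^ (-(1:ℝ)/2)) (Set.Ici 0) := by
  intro s (hs : 0 ≤ s) t (ht : 0 ≤ t) hst
  simp only [tprod_eq_exp_tsum_log hl0 hl1 hs, tprod_eq_exp_tsum_log hl0 hl1 ht, exp_le_exp]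
  have : ∑' k : ℕ, log (1 + s * l ^ k) ≤ ∑' k : ℕ, log (1 + t * l ^ k) :=
    Summable.tsum_le_tsum (fun k => log_le_log (by positivity) (by gcongr))
      (summable_log_one_add_mul_pow hl0 hl1 hs) (summable_log_one_add_mul_pow hl0 hl1 ht)
  linarith

lemma exp_neg_mul_le_tprod (hl0 : 0 ≤ l) (hl1 : l < 1) (ht : 0 ≤ t) :
    exp (-(2 * (1 - l))⁻¹ * t) ≤ ∏' k : ℕ, (1 + t * l ^ k) ^ (-(1:ℝ)/2) := by
  rw [tprod_eq_exp_tsum_log hl0 hl1 ht, exp_le_exp, mul_inv]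
  linarith [tsum_log_one_add_mul_pow_le hl0 hl1 ht]

lemma tprod_le_add_one_rpow (hl0 : 0 ≤ l) (hl1 : l < 1) (ht : 0 ≤ t) :
    ∏' k : ℕ, (1 + t * l ^ k) ^ (-(1:ℝ)/2) ≤ (t + 1) ^ (-(2 * (1 - l))⁻¹) := by
  rw [tprod_eq_exp_tsum_log hl0 hl1 ht, rpow_def_of_pos (by positivity), add_comm t, exp_le_exp,
    mul_inv]
  linarith [log_one_add_mul_le_tsum_log hl0 hl1 ht]

end Integrand

lemma integral_Ioi_add_one_rpow {a : ℝ} (ha : a < -1) :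
    ∫ t in Set.Ioi (0:ℝ), (t + 1) ^ a = -(a + 1)⁻¹ := by
  have hderiv : ∀ x ∈ Set.Ici (0:ℝ),
      HasDerivAt (fun t => (t + 1) ^ (a + 1) / (a + 1)) ((x + 1) ^ a) x := by
    intro x (hx : 0 ≤ x)
    have h := (((hasDerivAt_id x).add_const 1).rpow_const (p := a + 1)
      (Or.inl (by positivity))).div_const (a + 1)
    rwa [one_mul, add_sub_cancel_right, mul_div_cancel_left₀ _ (by linarith)] at h
  have hlim : Tendsto (fun t : ℝ => (t + 1) ^ (a + 1) / (a + 1)) atTop (nhds (0 / (a + 1))) := by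
    rw [← neg_neg (a + 1)]
    exact ((tendsto_rpow_neg_atTop (by linarith)).comp
      (tendsto_atTop_add_const_right _ 1 tendsto_id)).div_const _
  rw [integral_Ioi_of_hasDerivAt_of_tendsto' hderiv
    (integrableOn_add_rpow_Ioi_of_lt ha (by norm_num)) hlim]
  simp

section Bounds

variable {l : ℝ}

lemma neg_inv_two_mul_one_sub_lt_neg_one (hl : 1 / 2 < l) (hl1 : l < 1) :
    -(2 * (1 - l))⁻¹ < -1 := by
  rw [neg_lt_neg_iff, one_lt_inv₀ (by linarith)]
  linarith

lemma integrableOn_tprod (hl : 1 / 2 < l) (hl1 : l < 1) :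
    IntegrableOn (fun t : ℝ => ∏' k : ℕ, (1 + t * l ^ k) ^ (-(1:ℝ)/2)) (Set.Ioi 0) := by
  have hl0 : 0 ≤ l := by linarith
  refine Integrable.mono'
    (integrableOn_add_rpow_Ioi_of_lt (m := 1) (neg_inv_two_mul_one_sub_lt_neg_one hl hl1)
      (by norm_num))
    ((aemeasurable_restrict_of_antitoneOn measurableSet_Ioi
      ((antitoneOn_tprod hl0 hl1).mono Set.Ioi_subset_Ici_self)).aestronglyMeasurable) ?_
  filter_upwards [ae_restrict_mem measurableSet_Ioi] with t (ht : 0 < t)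
  rw [norm_of_nonneg (tprod_nonneg fun k => by positivity)]
  exact tprod_le_add_one_rpow hl0 hl1 ht.le

lemma two_mul_one_sub_le_integral_tprod (hl : 1 / 2 < l) (hl1 : l < 1) :
    2 * (1 - l) ≤ ∫ t in Set.Ioi (0:ℝ), ∏' k : ℕ, (1 + t * l ^ k) ^ (-(1:ℝ)/2) := by
  have hl0 : 0 ≤ l := by linarith
  have hb : 0 < (2 * (1 - l))⁻¹ := by rw [inv_pos]; linarith
  calc 2 * (1 - l) = ∫ t in Set.Ioi (0:ℝ), exp (-(2 * (1 - l))⁻¹ * t) := by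
        rw [integral_exp_mul_Ioi (neg_lt_zero.2 hb), mul_zero, exp_zero, neg_div, div_neg,
          neg_neg, one_div, inv_inv]
    _ ≤ _ := setIntegral_mono_on (exp_neg_integrableOn_Ioi 0 hb) (integrableOn_tprod hl hl1)
        measurableSet_Ioi fun t (ht : 0 < t) => exp_neg_mul_le_tprod hl0 hl1 ht.le

lemma integral_tprod_le (hl : 1 / 2 < l) (hl1 : l < 1) :
    ∫ t in Set.Ioi (0:ℝ), ∏' k : ℕ, (1 + t * l ^ k) ^ (-(1:ℝ)/2) ≤ 2 * (1 - l) / (2 * l - 1) := by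
  have hl0 : 0 ≤ l := by linarith
  have ha := neg_inv_two_mul_one_sub_lt_neg_one hl hl1
  calc _ ≤ ∫ t in Set.Ioi (0:ℝ), (t + 1) ^ (-(2 * (1 - l))⁻¹) :=
        setIntegral_mono_on (integrableOn_tprod hl hl1)
          (integrableOn_add_rpow_Ioi_of_lt ha (by norm_num)) measurableSet_Ioi
          fun t (ht : 0 < t) => tprod_le_add_one_rpow hl0 hl1 ht.le
    _ = 2 * (1 - l) / (2 * l - 1) := by
        have : 1 - l ≠ 0 := by linarith
        rw [integral_Ioi_add_one_rpow ha,
          show -(2 * (1 - l))⁻¹ + 1 = -((2 * l - 1) / (2 * (1 - l))) by field_simp; ring,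
          inv_neg, neg_neg, inv_div]

lemma one_le_Vmult (hl : 1 / 2 < l) (hl1 : l < 1) : 1 ≤ Vmult l := by
  rw [Vmult, one_div, le_inv_mul_iff₀ (by linarith), mul_one]
  exact two_mul_one_sub_le_integral_tprod hl hl1

lemma Vmult_le (hl : 1 / 2 < l) (hl1 : l < 1) : Vmult l ≤ (2 * l - 1)⁻¹ := by
  have : 1 - l ≠ 0 := by linarith
  calc Vmult l ≤ 1 / (2 * (1 - l)) * (2 * (1 - l) / (2 * l - 1)) :=
        mul_le_mul_of_nonneg_left (integral_tprod_le hl hl1) (by rw [one_div_nonneg]; linarith)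
    _ = (2 * l - 1)⁻¹ := by field_simp

end Bounds

theorem stmt_7 :
    Filter.Tendsto Vmult (nhdsWithin 1 (Set.Iio (1:ℝ))) (nhds 1) := by
  have hmem : Set.Ioo (1 / 2 : ℝ) 1 ∈ nhdsWithin 1 (Set.Iio (1:ℝ)) :=
    Ioo_mem_nhdsLT_of_mem (by norm_num)
  have hupper : Tendsto (fun l : ℝ => (2 * l - 1)⁻¹) (nhdsWithin 1 (Set.Iio 1)) (nhds 1) := by
    have hcont : ContinuousAt (fun l : ℝ => (2 * l - 1)⁻¹) 1 := by fun_prop (disch := norm_num)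
    convert hcont.tendsto.mono_left nhdsWithin_le_nhds
    norm_num
  exact tendsto_of_tendsto_of_tendsto_of_le_of_le' tendsto_const_nhds hupper
    (eventually_of_mem hmem fun l hl => one_le_Vmult hl.1 hl.2)
    (eventually_of_mem hmem fun l hl => Vmult_le hl.1 hl.2)
end

section
/- For every real $\lambda$ with $0.7 < \lambda < 1$, define $V(\lambda) = \frac{1}{2(1-\lambda)} \int_0^\infty \prod_{k=0}^\infty (1 + t\lambda^k)^{-1/2} \, dt$. Then $\frac{\lambda^{-1.45}\log(\lambda^{-1})}{\lambda^{-1}-1} \le V(\lambda) \le \frac{\lambda^{-1.5}\log(\lambda^{-1})}{\lambda^{-1}-1}$. -/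
/-!
Write `L m u = log ∏ₖ (1 + u mᵏ)`. Splitting the product over even and odd `k` gives
`L λ t = L λ² t + L λ² (λ t)`, and comparing the factors `(1 + x) (1 + λ x)` with `(1 + a x)²`
(AM-GM for `a = √λ`; for `a = λ ^ 0.45` this needs `1 + λ ≤ 2 λ ^ 0.45`, true on `[0.7, 1]`)
sandwiches the integrand `exp (-L λ t / 2)` of `V` between the values of `exp (-L λ² (a t))` for
these two `a`. Finally `F u = exp (-L m u)` satisfies `F (m u) = (1 + u) F u`, so
`∫₀^∞ F = ∫₀^∞ (F (m u) - F u) / u du = log m⁻¹` is a Frullani integral.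
-/

open MeasureTheory Real

open Set Filter Topology

/-- The logarithm of the `q`-Pochhammer symbol `(-u; m)_∞ = ∏ₖ (1 + u mᵏ)`. -/
noncomputable def logQPoch (m u : ℝ) : ℝ := ∑' k : ℕ, log (1 + u * m ^ k)

section logQPoch

variable {m : ℝ}

@[simp]
lemma logQPoch_zero : logQPoch m 0 = 0 := by
  simp [logQPoch]

lemma summable_log_one_add_mul_pow_s8 (hm0 : 0 ≤ m) (hm1 : m < 1) {u : ℝ} (hu : 0 ≤ u) :
    Summable fun k : ℕ => log (1 + u * m ^ k) := by
  refine .of_nonneg_of_le (fun k => log_nonneg ?_) (fun k => ?_)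
    ((summable_geometric_of_lt_one hm0 hm1).mul_left u)
  · have := mul_nonneg hu (pow_nonneg hm0 k)
    linarith
  · have := log_le_sub_one_of_pos (by positivity : 0 < 1 + u * m ^ k)
    linarith

lemma logQPoch_eq_log_add (hm0 : 0 ≤ m) (hm1 : m < 1) {u : ℝ} (hu : 0 ≤ u) :
    logQPoch m u = log (1 + u) + logQPoch m (m * u) := by
  rw [logQPoch, (summable_log_one_add_mul_pow_s8 hm0 hm1 hu).tsum_eq_zero_add, logQPoch]
  simp only [pow_zero, mul_one, pow_succ]
  congr 2 with k
  ring_nf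

lemma log_one_add_le_logQPoch (hm0 : 0 ≤ m) (hm1 : m < 1) {u : ℝ} (hu : 0 ≤ u) :
    log (1 + u) ≤ logQPoch m u := by
  rw [logQPoch_eq_log_add hm0 hm1 hu, le_add_iff_nonneg_right]
  exact tsum_nonneg fun k => log_nonneg
    (by have := mul_nonneg (mul_nonneg hm0 hu) (pow_nonneg hm0 k); linarith)

lemma continuousOn_logQPoch (hm0 : 0 ≤ m) (hm1 : m < 1) : ContinuousOn (logQPoch m) (Ici 0) := by
  intro x hx
  have hR : ContinuousOn (logQPoch m) (Icc 0 (x + 1)) := by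
    refine continuousOn_tsum (fun k => ?_)
      ((summable_geometric_of_lt_one hm0 hm1).mul_left (x + 1)) (fun k u hu => ?_)
    · refine ContinuousOn.log (by fun_prop) fun u hu => ?_
      have := mul_nonneg hu.1 (pow_nonneg hm0 k)
      positivity
    · have hk := pow_nonneg hm0 k
      have hpos : 0 < 1 + u * m ^ k := by have := mul_nonneg hu.1 hk; linarith
      rw [norm_of_nonneg (log_nonneg (by nlinarith [mul_nonneg hu.1 hk]))]
      nlinarith [log_le_sub_one_of_pos hpos, mul_le_mul_of_nonneg_right hu.2 hk]
  refine (hR x ⟨hx, by linarith⟩).mono_of_mem_nhdsWithin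
    (mem_of_superset (inter_mem_nhdsWithin _ (Iio_mem_nhds (lt_add_one x))) ?_)
  exact fun u hu => ⟨hu.1, hu.2.le⟩

lemma logQPoch_add_le_add (hm0 : 0 ≤ m) (hm1 : m < 1) {a b c d : ℝ} (ha : 0 ≤ a) (hb : 0 ≤ b)
    (hc : 0 ≤ c) (hd : 0 ≤ d) (h : ∀ x ≥ 0, (1 + a * x) * (1 + b * x) ≤ (1 + c * x) * (1 + d * x)) :
    logQPoch m a + logQPoch m b ≤ logQPoch m c + logQPoch m d := by
  have hs {u : ℝ} (hu : 0 ≤ u) := summable_log_one_add_mul_pow_s8 hm0 hm1 hu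
  rw [logQPoch, logQPoch, logQPoch, logQPoch, ← (hs ha).tsum_add (hs hb),
    ← (hs hc).tsum_add (hs hd)]
  refine (hs ha).add (hs hb) |>.tsum_le_tsum (fun k => ?_) ((hs hc).add (hs hd))
  have hk := pow_nonneg hm0 k
  rw [← log_mul (by positivity) (by positivity), ← log_mul (by positivity) (by positivity)]
  exact log_le_log (by positivity) (h _ hk)

lemma logQPoch_eq_add_sq (hm0 : 0 ≤ m) (hm1 : m < 1) {u : ℝ} (hu : 0 ≤ u) :
    logQPoch m u = logQPoch (m ^ 2) u + logQPoch (m ^ 2) (m * u) := by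
  have hm2 : m ^ 2 < 1 := by nlinarith
  have hs {v : ℝ} (hv : 0 ≤ v) := summable_log_one_add_mul_pow_s8 (sq_nonneg m) hm2 hv
  have heven (k : ℕ) : u * m ^ (2 * k) = u * (m ^ 2) ^ k := by rw [pow_mul]
  have hodd (k : ℕ) : u * m ^ (2 * k + 1) = m * u * (m ^ 2) ^ k := by rw [pow_succ, pow_mul]; ring
  rw [logQPoch, logQPoch, logQPoch, ← tsum_even_add_odd] <;> simp only [heven, hodd]
  · exact hs hu
  · exact hs (mul_nonneg hm0 hu)

lemma exp_neg_logQPoch_le (hm0 : 0 ≤ m) (hm1 : m < 1) {u : ℝ} (hu : 0 ≤ u) :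
    exp (-logQPoch m u) ≤ ((1 + u) * (1 + m * u))⁻¹ := by
  have h := log_one_add_le_logQPoch hm0 hm1 (mul_nonneg hm0 hu)
  rw [← exp_log (by positivity : 0 < ((1 + u) * (1 + m * u))⁻¹), log_inv,
    log_mul (by positivity) (by positivity), logQPoch_eq_log_add hm0 hm1 hu]
  exact exp_le_exp.2 (by linarith)

lemma exp_neg_logQPoch_mul_self (hm0 : 0 ≤ m) (hm1 : m < 1) {u : ℝ} (hu : 0 ≤ u) :
    exp (-logQPoch m (m * u)) = (1 + u) * exp (-logQPoch m u) := by
  rw [logQPoch_eq_log_add hm0 hm1 hu, neg_add, exp_add, ← mul_assoc, exp_neg (log _),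
    exp_log (by positivity), mul_inv_cancel₀ (by positivity), one_mul]

lemma continuousOn_exp_neg_logQPoch (hm0 : 0 ≤ m) (hm1 : m < 1) :
    ContinuousOn (fun u => exp (-logQPoch m u)) (Ici 0) :=
  (continuousOn_logQPoch hm0 hm1).neg.rexp

lemma integrableOn_exp_neg_logQPoch (hm0 : 0 < m) (hm1 : m < 1) :
    IntegrableOn (fun u => exp (-logQPoch m u)) (Ioi 0) := by
  refine (integrable_inv_one_add_sq.const_mul m⁻¹).integrableOn.mono'
    (((continuousOn_exp_neg_logQPoch hm0.le hm1).mono Ioi_subset_Ici_self).aestronglyMeasurable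
      measurableSet_Ioi) ?_
  filter_upwards [ae_restrict_mem measurableSet_Ioi] with u hu
  rw [norm_of_nonneg (exp_pos _).le, ← mul_inv]
  refine (exp_neg_logQPoch_le hm0.le hm1 hu.le).trans (inv_anti₀ (by positivity) ?_)
  nlinarith [mul_nonneg hm0.le (mem_Ioi.1 hu).le]

theorem integral_exp_neg_logQPoch (hm0 : 0 < m) (hm1 : m < 1) :
    ∫ u in Ioi 0, exp (-logQPoch m u) = log m⁻¹ := by
  set f := fun u => exp (-logQPoch m u) with hf
  have hcont : ContinuousOn f (Ici 0) := continuousOn_exp_neg_logQPoch hm0.le hm1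
  have hfrullani : EqOn (fun u => u⁻¹ • (f (m * u) - f (1 * u))) f (Ioi 0) := fun u hu => by
    have hu : 0 < u := hu
    simp only [hf, smul_eq_mul, one_mul, exp_neg_logQPoch_mul_self hm0.le hm1 hu.le]
    field_simp
    ring
  have hzero : Tendsto f (𝓝[>] 0) (𝓝 1) := by
    simpa [hf] using ((hcont 0 self_mem_Ici).mono Ioi_subset_Ici_self).tendsto
  have htop : Tendsto f atTop (𝓝 0) := by
    refine tendsto_of_tendsto_of_tendsto_of_le_of_le' tendsto_const_nhds tendsto_inv_atTop_zero
      (.of_forall fun u => (exp_pos _).le) ?_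
    filter_upwards [eventually_gt_atTop 0] with u hu
    refine (exp_neg_logQPoch_le hm0.le hm1 hu.le).trans (inv_anti₀ hu ?_)
    nlinarith [mul_nonneg hm0.le hu.le]
  have h := Frullani.integral_Ioi_eq
    ((hcont.mono Ioi_subset_Ici_self).locallyIntegrableOn measurableSet_Ioi) hm0 one_pos hzero htop
    ((integrableOn_exp_neg_logQPoch hm0 hm1).congr_fun hfrullani.symm measurableSet_Ioi)
  rwa [setIntegral_congr_fun measurableSet_Ioi hfrullani, one_div, sub_zero, smul_eq_mul,
    mul_one] at h

lemma integrableOn_exp_neg_logQPoch_mul (hm0 : 0 < m) (hm1 : m < 1) {a : ℝ} (ha : 0 < a) :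
    IntegrableOn (fun t => exp (-logQPoch m (a * t))) (Ioi 0) := by
  have h := (integrableOn_Ioi_comp_mul_left_iff (fun u => exp (-logQPoch m u)) 0 ha).2
  rw [mul_zero] at h
  exact h (integrableOn_exp_neg_logQPoch hm0 hm1)

lemma integral_exp_neg_logQPoch_mul (hm0 : 0 < m) (hm1 : m < 1) {a : ℝ} (ha : 0 < a) :
    ∫ t in Ioi 0, exp (-logQPoch m (a * t)) = a⁻¹ * log m⁻¹ := by
  rw [integral_comp_mul_left_Ioi (fun u => exp (-logQPoch m u)) 0 ha, mul_zero,
    integral_exp_neg_logQPoch hm0 hm1, smul_eq_mul]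

lemma tprod_one_add_mul_pow_rpow_s8 (hm0 : 0 ≤ m) (hm1 : m < 1) {u : ℝ} (hu : 0 ≤ u) (p : ℝ) :
    ∏' k : ℕ, (1 + u * m ^ k) ^ p = exp (p * logQPoch m u) := by
  have h := ((summable_log_one_add_mul_pow_s8 hm0 hm1 hu).hasSum.mul_left p).rexp
  rw [logQPoch, ← h.tprod_eq]
  exact tprod_congr fun k => by
    rw [Function.comp_apply, rpow_def_of_pos (by positivity), mul_comm]

end logQPoch

lemma two_mul_sqrt_le_one_add {x : ℝ} (hx : 0 ≤ x) : 2 * √x ≤ 1 + x := by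
  nlinarith [sq_nonneg (√x - 1), sq_sqrt hx]

section pairing

variable {l a t : ℝ}

lemma tprod_rpow_neg_half_le (hl0 : 0 ≤ l) (hl1 : l < 1) (ha : 0 ≤ a) (ht : 0 ≤ t)
    (h1 : 2 * a ≤ 1 + l) (h2 : a ^ 2 ≤ l) :
    ∏' k : ℕ, (1 + t * l ^ k) ^ (-(1:ℝ)/2) ≤ exp (-logQPoch (l ^ 2) (a * t)) := by
  have hpair := logQPoch_add_le_add (sq_nonneg l) (by nlinarith) (mul_nonneg ha ht)
    (mul_nonneg ha ht) ht (mul_nonneg hl0 ht) fun x hx => by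
      have hy : 0 ≤ t * x := mul_nonneg ht hx
      nlinarith [mul_le_mul_of_nonneg_right h1 hy,
        mul_le_mul_of_nonneg_right h2 (sq_nonneg (t * x))]
  rw [tprod_one_add_mul_pow_rpow_s8 hl0 hl1 ht, logQPoch_eq_add_sq hl0 hl1 ht]
  exact exp_le_exp.2 (by linarith)

lemma exp_neg_logQPoch_le_tprod_rpow_neg_half (hl0 : 0 ≤ l) (hl1 : l < 1) (ha : 0 ≤ a)
    (ht : 0 ≤ t) (h1 : 1 + l ≤ 2 * a) (h2 : l ≤ a ^ 2) :
    exp (-logQPoch (l ^ 2) (a * t)) ≤ ∏' k : ℕ, (1 + t * l ^ k) ^ (-(1:ℝ)/2) := by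
  have hpair := logQPoch_add_le_add (sq_nonneg l) (by nlinarith) ht (mul_nonneg hl0 ht)
    (mul_nonneg ha ht) (mul_nonneg ha ht) fun x hx => by
      have hy : 0 ≤ t * x := mul_nonneg ht hx
      nlinarith [mul_le_mul_of_nonneg_right h1 hy,
        mul_le_mul_of_nonneg_right h2 (sq_nonneg (t * x))]
  rw [tprod_one_add_mul_pow_rpow_s8 hl0 hl1 ht, logQPoch_eq_add_sq hl0 hl1 ht]
  exact exp_le_exp.2 (by linarith)

lemma integrableOn_tprod_rpow_neg_half (hl0 : 0 < l) (hl1 : l < 1) :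
    IntegrableOn (fun t => ∏' k : ℕ, (1 + t * l ^ k) ^ (-(1:ℝ)/2)) (Ioi 0) := by
  have hexp {t : ℝ} (ht : t ∈ Ioi 0) := tprod_one_add_mul_pow_rpow_s8 hl0.le hl1 (le_of_lt ht) (-1 / 2)
  have hcont : ContinuousOn (fun t => exp (-1 / 2 * logQPoch l t)) (Ioi 0) :=
    (continuousOn_const.mul ((continuousOn_logQPoch hl0.le hl1).mono Ioi_subset_Ici_self)).rexp
  refine (integrableOn_exp_neg_logQPoch_mul (m := l ^ 2) (by positivity) (by nlinarith)
    (sqrt_pos.2 hl0)).mono'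
    ((hcont.congr fun t ht => hexp ht).aestronglyMeasurable measurableSet_Ioi) ?_
  filter_upwards [ae_restrict_mem measurableSet_Ioi] with t ht
  rw [norm_of_nonneg (hexp ht ▸ (exp_pos _).le)]
  exact tprod_rpow_neg_half_le hl0.le hl1 (sqrt_nonneg l) (le_of_lt ht)
    (two_mul_sqrt_le_one_add hl0.le) (sq_sqrt hl0.le).le

lemma integral_tprod_rpow_neg_half_le (hl0 : 0 < l) (hl1 : l < 1) (ha : 0 < a)
    (h1 : 2 * a ≤ 1 + l) (h2 : a ^ 2 ≤ l) :
    ∫ t in Ioi 0, ∏' k : ℕ, (1 + t * l ^ k) ^ (-(1:ℝ)/2) ≤ 2 * a⁻¹ * log l⁻¹ := by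
  have hl2 : l ^ 2 < 1 := by nlinarith
  calc _ ≤ ∫ t in Ioi 0, exp (-logQPoch (l ^ 2) (a * t)) :=
        setIntegral_mono_on (integrableOn_tprod_rpow_neg_half hl0 hl1)
          (integrableOn_exp_neg_logQPoch_mul (by positivity) hl2 ha) measurableSet_Ioi
          fun t ht => tprod_rpow_neg_half_le hl0.le hl1 ha.le (le_of_lt ht) h1 h2
    _ = 2 * a⁻¹ * log l⁻¹ := by
        rw [integral_exp_neg_logQPoch_mul (by positivity) hl2 ha, ← inv_pow, log_pow]
        ring

lemma le_integral_tprod_rpow_neg_half (hl0 : 0 < l) (hl1 : l < 1) (ha : 0 < a)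
    (h1 : 1 + l ≤ 2 * a) (h2 : l ≤ a ^ 2) :
    2 * a⁻¹ * log l⁻¹ ≤ ∫ t in Ioi 0, ∏' k : ℕ, (1 + t * l ^ k) ^ (-(1:ℝ)/2) := by
  have hl2 : l ^ 2 < 1 := by nlinarith
  calc 2 * a⁻¹ * log l⁻¹ = ∫ t in Ioi 0, exp (-logQPoch (l ^ 2) (a * t)) := by
        rw [integral_exp_neg_logQPoch_mul (by positivity) hl2 ha, ← inv_pow, log_pow]
        ring
    _ ≤ _ :=
        setIntegral_mono_on (integrableOn_exp_neg_logQPoch_mul (by positivity) hl2 ha)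
          (integrableOn_tprod_rpow_neg_half hl0 hl1) measurableSet_Ioi
          fun t ht => exp_neg_logQPoch_le_tprod_rpow_neg_half hl0.le hl1 ha.le (le_of_lt ht) h1 h2

end pairing

lemma one_add_le_two_mul_rpow {x : ℝ} (h0 : 0.7 ≤ x) (h1 : x ≤ 1) :
    1 + x ≤ 2 * x ^ (0.45 : ℝ) := by
  have hend : (0.85 : ℝ) ≤ 0.7 ^ (0.45 : ℝ) :=
    calc (0.85 : ℝ) = (0.85 ^ 20) ^ ((20 : ℕ) : ℝ)⁻¹ :=
          (pow_rpow_inv_natCast (by norm_num) (by norm_num)).symm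
      _ ≤ (0.7 ^ 9) ^ ((20 : ℕ) : ℝ)⁻¹ := by gcongr; norm_num
      _ = 0.7 ^ (0.45 : ℝ) := by rw [← rpow_natCast, ← rpow_mul (by norm_num)]; norm_num
  -- `x ↦ x ^ 0.45` lies above its chord between `0.7` and `1`
  have hconc := (concaveOn_rpow (p := 0.45) (by norm_num) (by norm_num)).2
    (show (0.7 : ℝ) ∈ Ici 0 by norm_num) (show (1 : ℝ) ∈ Ici 0 by norm_num)
    (div_nonneg (by linarith : 0 ≤ 1 - x) (by norm_num : (0 : ℝ) ≤ 0.3))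
    (div_nonneg (by linarith : 0 ≤ x - 0.7) (by norm_num : (0 : ℝ) ≤ 0.3)) (by ring)
  have hx : (1 - x) / 0.3 * (0.7 : ℝ) + (x - 0.7) / 0.3 * 1 = x := by ring
  simp only [smul_eq_mul, one_rpow] at hconc
  rw [hx] at hconc
  have := mul_le_mul_of_nonneg_left hend
    (div_nonneg (by linarith : 0 ≤ 1 - x) (by norm_num : (0 : ℝ) ≤ 0.3))
  norm_num at hconc this ⊢
  linarith

theorem stmt_8 (l : ℝ) (hl0 : 0.7 < l) (hl1 : l < 1) :
    l ^ (-1.45 : ℝ) * Real.log l⁻¹ / (l⁻¹ - 1) ≤ Vmult l ∧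
      Vmult l ≤ l ^ (-1.5 : ℝ) * Real.log l⁻¹ / (l⁻¹ - 1) := by
  have hl : 0 < l := by linarith
  have hV : Vmult l =
      (∫ t in Ioi 0, ∏' k : ℕ, (1 + t * l ^ k) ^ (-(1:ℝ)/2)) / (2 * (1 - l)) := by
    rw [Vmult]; ring
  have hpow (p : ℝ) : l ^ (-(p + 1)) * log l⁻¹ / (l⁻¹ - 1) =
      2 * (l ^ p)⁻¹ * log l⁻¹ / (2 * (1 - l)) := by
    have : 1 - l ≠ 0 := by linarith
    rw [rpow_neg hl.le, rpow_add hl, rpow_one]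
    field_simp
  have hsq : l ≤ (l ^ (0.45 : ℝ)) ^ 2 := by
    rw [← rpow_natCast, ← rpow_mul hl.le]
    simpa using rpow_le_rpow_of_exponent_ge hl hl1.le (by norm_num : (0.45 : ℝ) * (2 : ℕ) ≤ 1)
  rw [hV, show (-1.45 : ℝ) = -(0.45 + 1) by norm_num, show (-1.5 : ℝ) = -(1 / 2 + 1) by norm_num,
    hpow, hpow, ← sqrt_eq_rpow]
  have h2 : 0 < 2 * (1 - l) := by linarith
  exact ⟨div_le_div_of_nonneg_right (le_integral_tprod_rpow_neg_half hl hl1 (by positivity)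
      (one_add_le_two_mul_rpow hl0.le hl1.le) hsq) h2.le,
    div_le_div_of_nonneg_right (integral_tprod_rpow_neg_half_le hl hl1 (sqrt_pos.2 hl)
      (two_mul_sqrt_le_one_add hl.le) (sq_sqrt hl.le).le) h2.le⟩
end

section
/- For every $t \ge 0$ and every $\lambda \in (0,1)$ and $\alpha \in (0, 1/2]$ satisfying $\alpha \le \frac{\log 2 - \log(1+\lambda)}{\log(\lambda^{-1})}$, and every integer $k \ge 0$, one has $(1 + t\lambda^{2k})(1 + t\lambda^{2k+1}) \le (1 + t\lambda^{2k+\alpha})^2$. -/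
/-!
With `x = t λ^{2k}` both sides are quadratics in `x` with constant term `1`. Comparing the
other coefficients leaves `1 + λ ≤ 2 λ^α`, which is the logarithmic bound on `α`, and
`λ ≤ λ^{2α}`, which is `α ≤ 1/2`.
-/

open Real

theorem one_add_mul_one_add_mul_le_sq {x l m : ℝ} (hx : 0 ≤ x) (hlin : 1 + l ≤ 2 * m)
    (hquad : l ≤ m ^ 2) : (1 + x) * (1 + x * l) ≤ (1 + x * m) ^ 2 := by
  nlinarith [mul_le_mul_of_nonneg_left hlin hx, mul_le_mul_of_nonneg_left hquad (sq_nonneg x)]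

theorem one_add_div_two_le_rpow {l a : ℝ} (hl0 : 0 < l) (hl1 : l < 1)
    (ha : a ≤ (log 2 - log (1 + l)) / log l⁻¹) : (1 + l) / 2 ≤ l ^ a := by
  have hlog : 0 < log l⁻¹ := log_pos (one_lt_inv₀ hl0 |>.mpr hl1)
  have hmul : a * log l⁻¹ ≤ log 2 - log (1 + l) := (le_div_iff₀ hlog).mp ha
  rw [log_inv] at hmul
  rw [← log_le_log_iff (by positivity) (rpow_pos_of_pos hl0 a), log_rpow hl0,
    log_div (by positivity) two_ne_zero]
  linarith

theorem le_rpow_sq_of_le_half {l a : ℝ} (hl0 : 0 < l) (hl1 : l ≤ 1) (ha : a ≤ 1 / 2) :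
    l ≤ (l ^ a) ^ 2 := by
  rw [← rpow_mul_natCast hl0.le]
  calc l = l ^ (1 : ℝ) := (rpow_one l).symm
    _ ≤ l ^ (a * (2 : ℕ)) := rpow_le_rpow_of_exponent_ge hl0 hl1 (by push_cast; linarith)

theorem stmt_9_general (t : ℝ) (ht : 0 ≤ t) (l : ℝ) (hl0 : 0 < l) (hl1 : l < 1)
    (a : ℝ) (ha1 : a ≤ 1/2)
    (ha : a ≤ (Real.log 2 - Real.log (1 + l)) / Real.log l⁻¹) (k : ℕ) :
    (1 + t * l^(2*k)) * (1 + t * l^(2*k+1)) ≤ (1 + t * l ^ ((2*k : ℝ) + a))^2 := by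
  have hsplit : l ^ ((2 * k : ℝ) + a) = l ^ (2 * k) * l ^ a := by
    rw [rpow_add hl0, ← rpow_natCast]
    push_cast
    rfl
  rw [hsplit, pow_succ, ← mul_assoc, ← mul_assoc]
  apply one_add_mul_one_add_mul_le_sq (by positivity)
  · linarith [one_add_div_two_le_rpow hl0 hl1 ha]
  · exact le_rpow_sq_of_le_half hl0 hl1.le ha1

theorem stmt_9 (t : ℝ) (ht : 0 ≤ t) (l : ℝ) (hl0 : 0 < l) (hl1 : l < 1)
    (a : ℝ) (ha0 : 0 < a) (ha1 : a ≤ 1/2)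
    (ha : a ≤ (Real.log 2 - Real.log (1 + l)) / Real.log l⁻¹) (k : ℕ) :
    (1 + t * l^(2*k)) * (1 + t * l^(2*k+1)) ≤ (1 + t * l ^ ((2*k : ℝ) + a))^2 :=
  stmt_9_general t ht l hl0 hl1 a ha1 ha k
end

section
/- For every real $h > 0$, $\sqrt{2\pi}\,(1 - 2e^{-2\pi^2/h^2}) \le \sum_{n=-\infty}^{\infty} h\, e^{-(n+1/2)^2 h^2/2} \le \sqrt{2\pi}$. -/
/-!
Jacobi's theta transformation (Poisson summation for a Gaussian) with shift `1/2` turns the sum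
into `√(2π) ∑ₙ (-1)ⁿ e^{-c n²}` with `c = 2π²/h²`. Pairing `n` with `-n`, this alternating theta
value is `1 - 2 ∑_{m ≥ 0} (-1)ᵐ e^{-c (m+1)²}`, and the alternating series of the decreasing
terms `e^{-c (m+1)²}` has a sum between `0` and its first term `e^{-c}`.
-/

open Real

theorem tsum_exp_neg_div_mul_int_add_half_sq {a : ℝ} (ha : 0 < a) :
    ∑' n : ℤ, exp (-π / a * (n + 1 / 2) ^ 2) =
      √a * ∑' n : ℤ, (-1 : ℝ) ^ n * exp (-π * a * n ^ 2) := by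
  -- With `b = -i/2` the phase `e^{2πibn}` is `(-1)ⁿ` and the dual shift `ib` is `1/2`.
  have h_jacobi := Complex.tsum_exp_neg_quadratic (a := a) (by simpa using ha) (-Complex.I / 2)
  have h_phase (n : ℤ) : Complex.exp (-π * a * n ^ 2 + 2 * π * (-Complex.I / 2) * n) =
      ((-1 : ℝ) ^ n * exp (-π * a * n ^ 2) : ℝ) := by
    rw [show -π * a * n ^ 2 + 2 * π * (-Complex.I / 2) * n =
        ((-π * a * n ^ 2 : ℝ) : ℂ) + n * (-(π * Complex.I)) by push_cast; ring,
      Complex.exp_add, Complex.exp_int_mul, Complex.exp_neg, Complex.exp_pi_mul_I, inv_neg_one]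
    push_cast
    ring
  have h_shift (n : ℤ) : Complex.exp (-π / a * (n + Complex.I * (-Complex.I / 2)) ^ 2) =
      (exp (-π / a * (n + 1 / 2) ^ 2) : ℝ) := by
    rw [show Complex.I * (-Complex.I / 2) = 1 / 2 by
      rw [neg_div, mul_neg, ← mul_div_assoc, Complex.I_mul_I]; norm_num]
    push_cast
    rfl
  have hsqrt : (1 : ℂ) / (a : ℂ) ^ (1 / 2 : ℂ) = ((1 / √a : ℝ) : ℂ) := by
    rw [sqrt_eq_rpow, Complex.ofReal_div, Complex.ofReal_cpow ha.le]
    push_cast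
    rfl
  simp_rw [h_phase, h_shift, hsqrt, ← Complex.ofReal_tsum, ← Complex.ofReal_mul, Complex.ofReal_inj] at h_jacobi
  rw [h_jacobi, ← mul_assoc, mul_one_div_cancel (sqrt_pos.mpr ha).ne', one_mul]

theorem tsum_neg_one_zpow_mul_exp_neg_mul_int_sq_mem_Icc {c : ℝ} (hc : 0 < c) :
    ∑' n : ℤ, (-1 : ℝ) ^ n * exp (-c * n ^ 2) ∈ Set.Icc (1 - 2 * exp (-c)) 1 := by
  set f : ℤ → ℝ := fun n ↦ (-1 : ℝ) ^ n * exp (-c * n ^ 2)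
  set g : ℕ → ℝ := fun m ↦ exp (-c * ((m : ℝ) + 1) ^ 2)
  have hf_even : f.Even := fun n ↦ by simp [f, ← inv_zpow]
  have hf_summable : Summable f := by
    have hnat : Summable fun n : ℕ ↦ f n := by
      refine Summable.of_norm_bounded (g := fun n : ℕ ↦ exp (-c * ((n : ℝ) ^ 2)))
        (summable_exp_nat_mul_of_ge (neg_lt_zero.mpr hc) fun i ↦ ?_) fun n ↦ ?_
      · norm_cast; nlinarith
      · simp [f]
    exact summable_int_iff_summable_nat_and_neg.mpr ⟨hnat, hnat.congr fun n ↦ (hf_even n).symm⟩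
  have hg_summable : Summable g :=
    summable_exp_nat_mul_of_ge (neg_lt_zero.mpr hc) fun i ↦ by nlinarith
  have hg_anti : Antitone g := fun m n hmn ↦ by
    have : ((m : ℝ) + 1) ^ 2 ≤ ((n : ℝ) + 1) ^ 2 := by gcongr
    exact exp_le_exp.mpr (by nlinarith)
  have hf_succ (m : ℕ) : f (m + 1 : ℕ) = -((-1) ^ m * g m) := by
    simp only [f, g]
    push_cast
    rw [zpow_add_one₀ (by norm_num), zpow_natCast]
    ring
  have hf_tsum : ∑' n, f n = 1 - 2 * ∑' m, (-1) ^ m * g m := by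
    rw [tsum_int_eq_zero_add_two_mul_tsum_pnat hf_even hf_summable,
      tsum_pnat_eq_tsum_succ (f := fun n : ℕ ↦ f n)]
    have hf0 : f 0 = 1 := by simp [f]
    simp only [hf_succ, tsum_neg, two_nsmul, hf0]
    ring
  have hlim := hg_summable.tendsto_alternating_series_tsum
  have lower := hg_anti.alternating_series_le_tendsto hlim 0
  have upper := hg_anti.tendsto_le_alternating_series hlim 0
  have hg0 : g 0 = exp (-c) := by simp [g]
  simp only [mul_zero, zero_add, Finset.range_zero, Finset.sum_empty, Finset.sum_range_one,
    pow_zero, one_mul, hg0] at lower upper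
  constructor <;> linarith

theorem stmt_11 (h : ℝ) (hh : 0 < h) :
    Real.sqrt (2 * Real.pi) * (1 - 2 * Real.exp (-2 * Real.pi^2 / h^2))
        ≤ ∑' n : ℤ, h * Real.exp (-((n : ℝ) + 1/2)^2 * h^2 / 2) ∧
      ∑' n : ℤ, h * Real.exp (-((n : ℝ) + 1/2)^2 * h^2 / 2)
        ≤ Real.sqrt (2 * Real.pi) := by
  have ha : 0 < 2 * π / h ^ 2 := by positivity
  have h_sqrt : h * √(2 * π / h ^ 2) = √(2 * π) := by
    rw [sqrt_div' _ (sq_nonneg h), sqrt_sq hh.le]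
    field_simp
  have h_sum : ∑' n : ℤ, h * exp (-((n : ℝ) + 1 / 2) ^ 2 * h ^ 2 / 2) =
      √(2 * π) * ∑' n : ℤ, (-1 : ℝ) ^ n * exp (-(2 * π ^ 2 / h ^ 2) * n ^ 2) := by
    have h_exp (n : ℤ) : exp (-((n : ℝ) + 1 / 2) ^ 2 * h ^ 2 / 2) =
        exp (-π / (2 * π / h ^ 2) * (n + 1 / 2) ^ 2) := by
      congr 1
      field_simp
    rw [tsum_mul_left, tsum_congr h_exp, tsum_exp_neg_div_mul_int_add_half_sq ha, ← mul_assoc,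
      h_sqrt, show -π * (2 * π / h ^ 2) = -(2 * π ^ 2 / h ^ 2) by ring]
  obtain ⟨lower, upper⟩ :=
    tsum_neg_one_zpow_mul_exp_neg_mul_int_sq_mem_Icc (c := 2 * π ^ 2 / h ^ 2) (by positivity)
  rw [h_sum, neg_mul, neg_div]
  exact ⟨mul_le_mul_of_nonneg_left lower (sqrt_nonneg _),
    mul_le_of_le_one_right (sqrt_nonneg _) upper⟩
end

section
/- For every real $\lambda \in (0,1)$, $\sum_{n=0}^{\infty} \lambda^{n(n+1)/2} = \prod_{n=1}^{\infty} \frac{1 - \lambda^{2n}}{1 - \lambda^{2n-1}}$. -/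
/-!
Gauss's identity as the limit of a finite form of the Jacobi triple product. Write `(a;q)_n` for
`qPochhammer a q n` and `T j = j(j+1)/2`. The q-binomial theorem
`∏_{k<m} (x + z q^(k+1)) = ∑_j [m, j]_q q^(T j) z^j x^(m-j)` at `m = 2n+1`, `x = q^(n+1)`, `z = 1`
has product `2 q^c (-q;q)_n²`, and its sum splits into the terms `j = n - i` and `j = n + 1 + i`,
both carrying `q^(c + T i)`. Dividing by `(q;q)_{2n+1}` gives
`(-q;q)_n² / (q;q)_{2n+1} = ∑_{i ≤ n} q^(T i) / ((q;q)_{n-i} (q;q)_{n+1+i})`,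
whose right side tends to `∑ q^(T i) / (q;q)_∞²` by Tannery's theorem. Since
`(q;q)_n (-q;q)_n = (q²;q²)_n` and `(q;q)_{2n+1} = (q²;q²)_n (q;q²)_{n+1}`, multiplying by
`(q;q)_n²` turns the left side into the partial products `(q²;q²)_n / (q;q²)_{n+1}`.
-/

open Finset Filter Topology

def triangle (n : ℕ) : ℕ := n * (n + 1) / 2

theorem two_mul_triangle (n : ℕ) : 2 * triangle n = n * (n + 1) :=
  Nat.mul_div_cancel' (Nat.even_mul_succ_self n).two_dvd

theorem triangle_succ (n : ℕ) : triangle (n + 1) = triangle n + (n + 1) := by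
  nlinarith [two_mul_triangle n, two_mul_triangle (n + 1)]

theorem le_triangle (n : ℕ) : n ≤ triangle n := by
  nlinarith [two_mul_triangle n]

theorem sum_range_succ_eq_triangle (n : ℕ) : ∑ k ∈ range n, (k + 1) = triangle n := by
  induction n with
  | zero => rfl
  | succ n ih => rw [sum_range_succ, ih, triangle_succ]

section CommRing

variable {R : Type*} [CommRing R]

def qPochhammer (a q : R) (n : ℕ) : R := ∏ k ∈ range n, (1 - a * q ^ k)

theorem qPochhammer_succ (a q : R) (n : ℕ) :
    qPochhammer a q (n + 1) = qPochhammer a q n * (1 - a * q ^ n) :=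
  prod_range_succ _ _

theorem qPochhammer_mul_qPochhammer_neg (a q : R) (n : ℕ) :
    qPochhammer a q n * qPochhammer (-a) q n = qPochhammer (a ^ 2) (q ^ 2) n := by
  rw [qPochhammer, qPochhammer, qPochhammer, ← prod_mul_distrib]
  refine prod_congr rfl fun k _ => ?_
  ring

theorem qPochhammer_two_mul_add_one (a q : R) (n : ℕ) :
    qPochhammer a q (2 * n + 1) =
      qPochhammer (a * q) (q ^ 2) n * qPochhammer a (q ^ 2) (n + 1) := by
  induction n with
  | zero => simp [qPochhammer]
  | succ n ih =>
    rw [show 2 * (n + 1) + 1 = 2 * n + 1 + 1 + 1 by ring, qPochhammer_succ a q (2 * n + 1 + 1),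
      qPochhammer_succ a q (2 * n + 1), ih, qPochhammer_succ (a * q) (q ^ 2) n,
      qPochhammer_succ a (q ^ 2) (n + 1)]
    ring

def qBinom (q : R) : ℕ → ℕ → R
  | _, 0 => 1
  | 0, _ + 1 => 0
  | m + 1, j + 1 => q ^ (j + 1) * qBinom q m (j + 1) + qBinom q m j

@[simp] theorem qBinom_zero_right (q : R) (m : ℕ) : qBinom q m 0 = 1 := by
  cases m <;> rfl

theorem qBinom_succ_succ (q : R) (m j : ℕ) :
    qBinom q (m + 1) (j + 1) = q ^ (j + 1) * qBinom q m (j + 1) + qBinom q m j := rfl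

theorem qBinom_eq_zero_of_lt (q : R) {m j : ℕ} (h : m < j) : qBinom q m j = 0 := by
  induction m generalizing j with
  | zero => obtain ⟨j, rfl⟩ := Nat.exists_eq_add_of_lt h; rfl
  | succ m ih =>
    obtain ⟨j, rfl⟩ := Nat.exists_eq_add_of_lt h
    rw [qBinom_succ_succ, ih (by omega), ih (by omega)]
    ring

theorem qBinom_mul_qPochhammer (q : R) {m j : ℕ} (h : j ≤ m) :
    qBinom q m j * qPochhammer q q j * qPochhammer q q (m - j) = qPochhammer q q m := by
  induction m generalizing j with
  | zero => obtain rfl := Nat.le_zero.mp h; simp [qPochhammer]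
  | succ m ih =>
    rcases j with _ | j
    · simp [qPochhammer]
    rw [qBinom_succ_succ, Nat.add_sub_add_right, qPochhammer_succ q q m, qPochhammer_succ q q j]
    rcases (Nat.le_of_succ_le_succ h).lt_or_eq with hj | rfl
    · obtain ⟨d, rfl⟩ := Nat.exists_eq_add_of_lt hj
      have h₁ := ih (j := j + 1) (by omega)
      have h₂ := ih (j := j) (by omega)
      rw [show j + d + 1 - (j + 1) = d by omega, qPochhammer_succ] at h₁
      rw [show j + d + 1 - j = d + 1 by omega, qPochhammer_succ] at h₂ ⊢
      linear_combination (q ^ (j + 1) * (1 - q * q ^ d)) * h₁ + (1 - q * q ^ j) * h₂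
    · have h₀ := ih (j := j) le_rfl
      rw [Nat.sub_self] at h₀ ⊢
      rw [qBinom_eq_zero_of_lt q (Nat.lt_succ_self j)]
      simp only [qPochhammer, range_zero, prod_empty, mul_one] at h₀ ⊢
      linear_combination (1 - q * q ^ j) * h₀

theorem prod_add_mul_pow_succ_eq_sum_qBinom (q x z : R) (m : ℕ) :
    ∏ k ∈ range m, (x + z * q ^ (k + 1)) =
      ∑ j ∈ range (m + 1), qBinom q m j * q ^ triangle j * z ^ j * x ^ (m - j) := by
  induction m generalizing z with
  | zero => simp [triangle]
  | succ m ih =>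
    set s := ∑ j ∈ range (m + 1), qBinom q m j * q ^ triangle j * (z * q) ^ j * x ^ (m - j)
    have hx : x * s =
        ∑ j ∈ range (m + 2), q ^ j * qBinom q m j * q ^ triangle j * z ^ j * x ^ (m + 1 - j) := by
      rw [sum_range_succ _ (m + 1), qBinom_eq_zero_of_lt q (Nat.lt_succ_self m), mul_sum]
      simp only [mul_zero, zero_mul, add_zero]
      refine sum_congr rfl fun j hj => ?_
      rw [Nat.sub_add_comm (Nat.le_of_lt_succ (mem_range.mp hj))]
      ring
    have hz : z * q * s =
        ∑ j ∈ range (m + 1), qBinom q m j * q ^ triangle (j + 1) * z ^ (j + 1) * x ^ (m - j) := by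
      rw [mul_sum]
      refine sum_congr rfl fun j _ => ?_
      rw [triangle_succ]
      ring
    have hshift : ∏ k ∈ range m, (x + z * q ^ (k + 1 + 1)) =
        ∏ k ∈ range m, (x + z * q * q ^ (k + 1)) :=
      prod_congr rfl fun k _ => by ring
    rw [prod_range_succ', hshift, ih, zero_add, pow_one, mul_comm, add_mul, hx, hz,
      sum_range_succ' _ (m + 1), sum_range_succ' _ (m + 1)]
    simp only [qBinom_succ_succ, Nat.add_sub_add_right, qBinom_zero_right]
    rw [add_right_comm, ← sum_add_distrib]
    congr 1
    · refine sum_congr rfl fun j _ => ?_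
      ring
    · simp [triangle]

theorem prod_range_pow_add_pow (q : R) (n : ℕ) :
    ∏ k ∈ range (2 * n + 1), (q ^ (n + 1) + q ^ (k + 1)) =
      q ^ (triangle n + (n + 1) ^ 2) * (2 * qPochhammer (-q) q n ^ 2) := by
  have hlow : ∏ k ∈ range n, (q ^ (n + 1) + q ^ (k + 1)) =
      q ^ triangle n * qPochhammer (-q) q n := by
    have hfac : ∀ k ∈ range n,
        q ^ (n + 1) + q ^ (k + 1) = q ^ (k + 1) * (1 + q ^ (n - k)) := by
      intro k hk
      rw [mul_add, ← pow_add, show k + 1 + (n - k) = n + 1 by have := mem_range.mp hk; omega,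
        mul_one, add_comm]
    rw [prod_congr rfl hfac, prod_mul_distrib, prod_pow_eq_pow_sum, sum_range_succ_eq_triangle,
      qPochhammer, ← prod_range_reflect]
    refine congrArg _ (prod_congr rfl fun k hk => ?_)
    rw [show n - (n - 1 - k) = k + 1 by have := mem_range.mp hk; omega]
    ring
  have hhigh : ∏ k ∈ range n, (q ^ (n + 1) + q ^ (n + 1 + k + 1)) =
      q ^ ((n + 1) * n) * qPochhammer (-q) q n := by
    have hfac : ∀ k ∈ range n,
        q ^ (n + 1) + q ^ (n + 1 + k + 1) = q ^ (n + 1) * (1 - -q * q ^ k) :=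
      fun k _ => by ring
    rw [prod_congr rfl hfac, prod_mul_distrib, prod_const, card_range, pow_mul, qPochhammer]
  rw [show 2 * n + 1 = n + 1 + n by ring, prod_range_add, prod_range_succ, hlow, hhigh]
  ring

theorem sum_range_qBinom_mul_pow (q : R) (n : ℕ) :
    ∑ j ∈ range (2 * n + 1 + 1),
        qBinom q (2 * n + 1) j * q ^ triangle j * (q ^ (n + 1)) ^ (2 * n + 1 - j) =
      q ^ (triangle n + (n + 1) ^ 2) *
        ∑ i ∈ range (n + 1), (qBinom q (2 * n + 1) (n - i) + qBinom q (2 * n + 1) (n + 1 + i)) *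
          q ^ triangle i := by
  rw [show 2 * n + 1 + 1 = (n + 1) + (n + 1) by ring, sum_range_add, ← sum_range_reflect, mul_sum,
    ← sum_add_distrib]
  refine sum_congr rfl fun i hi => ?_
  obtain ⟨d, rfl⟩ := Nat.exists_eq_add_of_le (Nat.le_of_lt_succ (mem_range.mp hi))
  have hlow : q ^ triangle d * (q ^ (i + d + 1)) ^ (2 * i + d + 1) =
      q ^ (triangle (i + d) + (i + d + 1) ^ 2) * q ^ triangle i := by
    rw [← pow_mul, ← pow_add, ← pow_add]
    congr 1
    nlinarith [two_mul_triangle i, two_mul_triangle d, two_mul_triangle (i + d)]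
  have hhigh : q ^ triangle (i + d + 1 + i) * (q ^ (i + d + 1)) ^ d =
      q ^ (triangle (i + d) + (i + d + 1) ^ 2) * q ^ triangle i := by
    rw [← pow_mul, ← pow_add, ← pow_add]
    congr 1
    nlinarith [two_mul_triangle i, two_mul_triangle (i + d + 1 + i), two_mul_triangle (i + d)]
  rw [show i + d + 1 - 1 - i = d by omega, show 2 * (i + d) + 1 - d = 2 * i + d + 1 by omega,
    show 2 * (i + d) + 1 - (i + d + 1 + i) = d by omega, show i + d - i = d by omega]
  linear_combination qBinom q (2 * (i + d) + 1) d * hlow +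
    qBinom q (2 * (i + d) + 1) (i + d + 1 + i) * hhigh

theorem two_mul_qPochhammer_neg_sq [IsDomain R] {q : R} (hq : q ≠ 0) (n : ℕ) :
    2 * qPochhammer (-q) q n ^ 2 =
      ∑ i ∈ range (n + 1), (qBinom q (2 * n + 1) (n - i) + qBinom q (2 * n + 1) (n + 1 + i)) *
        q ^ triangle i :=
  mul_left_cancel₀ (pow_ne_zero (triangle n + (n + 1) ^ 2) hq) <| by
    have h := prod_add_mul_pow_succ_eq_sum_qBinom q (q ^ (n + 1)) 1 (2 * n + 1)
    simp only [one_mul, one_pow, mul_one] at h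
    rw [← prod_range_pow_add_pow, h, sum_range_qBinom_mul_pow]

end CommRing

theorem tendsto_sum_range_of_dominated_convergence {G : Type*} [NormedAddCommGroup G]
    [CompleteSpace G] {f : ℕ → ℕ → G} {g : ℕ → G} {bound : ℕ → ℝ} (h_sum : Summable bound)
    (hf : ∀ i, Tendsto (f · i) atTop (𝓝 (g i))) (h_bound : ∀ n, ∀ i < n, ‖f n i‖ ≤ bound i) :
    Tendsto (fun n => ∑ i ∈ range n, f n i) atTop (𝓝 (∑' i, g i)) := by
  have hlim : ∀ i, Tendsto (fun n => if i < n then f n i else 0) atTop (𝓝 (g i)) := fun i =>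
    (hf i).congr' <| (eventually_gt_atTop i).mono fun n hn => (if_pos hn).symm
  have hle : ∀ n i, ‖if i < n then f n i else 0‖ ≤ bound i := fun n i => by
    split_ifs with hi
    · exact h_bound n i hi
    · simpa using (norm_nonneg _).trans (h_bound (i + 1) i (Nat.lt_succ_self i))
  refine (tendsto_tsum_of_dominated_convergence h_sum hlim (Eventually.of_forall hle)).congr
    fun n => ?_
  exact (tsum_eq_sum fun i hi => if_neg (by simpa using hi)).trans
    (sum_congr rfl fun i hi => if_pos (mem_range.mp hi))

theorem one_sub_mul_pow_pos {a q : ℝ} (ha : |a| < 1) (hq : |q| ≤ 1) (k : ℕ) :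
    0 < 1 - a * q ^ k := by
  have : a * q ^ k ≤ |a| := by
    refine (le_abs_self _).trans ?_
    rw [abs_mul, abs_pow]
    exact mul_le_of_le_one_right (abs_nonneg a) (pow_le_one₀ (abs_nonneg q) hq)
  linarith

theorem qPochhammer_pos {a q : ℝ} (ha : |a| < 1) (hq : |q| ≤ 1) (n : ℕ) :
    0 < qPochhammer a q n :=
  prod_pos fun k _ => one_sub_mul_pow_pos ha hq k

theorem qPochhammer_antitone {a q : ℝ} (ha₀ : 0 ≤ a) (ha₁ : a < 1) (hq₀ : 0 ≤ q) (hq₁ : q ≤ 1) :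
    Antitone (qPochhammer a q) := by
  refine antitone_nat_of_succ_le fun n => ?_
  rw [qPochhammer_succ]
  refine mul_le_of_le_one_right (qPochhammer_pos ?_ ?_ n).le ?_
  · rwa [abs_of_nonneg ha₀]
  · rwa [abs_of_nonneg hq₀]
  · linarith [mul_nonneg ha₀ (pow_nonneg hq₀ n)]

theorem exists_hasProd_one_sub_mul_pow {a q : ℝ} (ha : |a| < 1) (hq : |q| < 1) :
    ∃ L > 0, HasProd (fun k => 1 - a * q ^ k) L := by
  have hsum : Summable fun k => -(a * q ^ k) :=
    ((summable_geometric_of_abs_lt_one hq).mul_left a).neg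
  obtain ⟨s, hs⟩ := Real.summable_log_one_add_of_summable hsum
  refine ⟨_, Real.exp_pos s, Real.hasProd_of_hasSum_log (one_sub_mul_pow_pos ha hq.le) ?_⟩
  simpa only [← sub_eq_add_neg] using hs

theorem summable_pow_triangle {q : ℝ} (hq₀ : 0 ≤ q) (hq₁ : q < 1) :
    Summable fun n => q ^ triangle n :=
  (summable_geometric_of_lt_one hq₀ hq₁).of_nonneg_of_le (fun _ => pow_nonneg hq₀ _)
    fun n => pow_le_pow_of_le_one hq₀ hq₁.le (le_triangle n)

theorem qPochhammer_neg_sq_div_eq_sum {q : ℝ} (hq₀ : q ≠ 0) (hq : |q| < 1) (n : ℕ) :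
    qPochhammer (-q) q n ^ 2 / qPochhammer q q (2 * n + 1) =
      ∑ i ∈ range (n + 1),
        q ^ triangle i / (qPochhammer q q (n - i) * qPochhammer q q (n + 1 + i)) := by
  have hP : ∀ m, qPochhammer q q m ≠ 0 := fun m => (qPochhammer_pos hq hq.le m).ne'
  have hbinom : ∀ {m j}, j ≤ m →
      qBinom q m j = qPochhammer q q m / (qPochhammer q q j * qPochhammer q q (m - j)) :=
    fun h => eq_div_of_mul_eq (mul_ne_zero (hP _) (hP _)) <| by
      rw [← mul_assoc]; exact qBinom_mul_qPochhammer q h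
  have hterm : ∀ i ∈ range (n + 1),
      (qBinom q (2 * n + 1) (n - i) + qBinom q (2 * n + 1) (n + 1 + i)) * q ^ triangle i =
        2 * qPochhammer q q (2 * n + 1) *
          (q ^ triangle i / (qPochhammer q q (n - i) * qPochhammer q q (n + 1 + i))) := by
    intro i hi
    have hi : i ≤ n := Nat.le_of_lt_succ (mem_range.mp hi)
    rw [hbinom (by omega), hbinom (by omega), show 2 * n + 1 - (n - i) = n + 1 + i by omega,
      show 2 * n + 1 - (n + 1 + i) = n - i by omega]
    ring
  have h := two_mul_qPochhammer_neg_sq hq₀ n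
  rw [sum_congr rfl hterm, ← mul_sum] at h
  rw [div_eq_iff (hP _)]
  linear_combination h / 2

theorem tendsto_qPochhammer_neg_sq_div {q L : ℝ} (hq₀ : 0 < q) (hq₁ : q < 1) (hL : 0 < L)
    (hP : Tendsto (qPochhammer q q) atTop (𝓝 L)) :
    Tendsto (fun n => qPochhammer (-q) q n ^ 2 / qPochhammer q q (2 * n + 1)) atTop
      (𝓝 (∑' i, q ^ triangle i / (L * L))) := by
  have hLP : ∀ m, L ≤ qPochhammer q q m :=
    (qPochhammer_antitone hq₀.le hq₁ hq₀.le hq₁.le).le_of_tendsto hP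
  have hlim := tendsto_sum_range_of_dominated_convergence
    (f := fun m i => q ^ triangle i / (qPochhammer q q (m - 1 - i) * qPochhammer q q (m + i)))
    ((summable_pow_triangle hq₀.le hq₁).div_const (L * L))
    (fun i => tendsto_const_nhds.div ((hP.comp ((tendsto_sub_atTop_nat i).comp
      (tendsto_sub_atTop_nat 1))).mul (hP.comp (tendsto_add_atTop_nat i))) (mul_pos hL hL).ne')
    (fun m i _ => by
      have hpos := mul_pos (hL.trans_le (hLP (m - 1 - i))) (hL.trans_le (hLP (m + i)))
      rw [Real.norm_of_nonneg (div_nonneg (pow_nonneg hq₀.le _) hpos.le)]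
      exact div_le_div_of_nonneg_left (pow_nonneg hq₀.le _) (mul_pos hL hL)
        (mul_le_mul (hLP _) (hLP _) hL.le (hL.trans_le (hLP _)).le))
  have hq : |q| < 1 := by rwa [abs_of_pos hq₀]
  refine (hlim.comp (tendsto_add_atTop_nat 1)).congr fun n => ?_
  simp only [Function.comp, qPochhammer_neg_sq_div_eq_sum hq₀.ne' hq, Nat.add_sub_cancel]

theorem tendsto_qPochhammer_sq_div_qPochhammer {q : ℝ} (hq₀ : 0 < q) (hq₁ : q < 1) :
    Tendsto (fun n => qPochhammer (q ^ 2) (q ^ 2) n / qPochhammer q (q ^ 2) (n + 1)) atTop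
      (𝓝 (∑' i, q ^ triangle i)) := by
  have hq : |q| < 1 := by rwa [abs_of_pos hq₀]
  obtain ⟨L, hL, hPL⟩ := exists_hasProd_one_sub_mul_pow hq hq
  have hP : Tendsto (qPochhammer q q) atTop (𝓝 L) := hPL.tendsto_prod_nat
  have hfactor : ∀ n, qPochhammer (q ^ 2) (q ^ 2) n / qPochhammer q (q ^ 2) (n + 1) =
      qPochhammer q q n ^ 2 * (qPochhammer (-q) q n ^ 2 / qPochhammer q q (2 * n + 1)) := by
    intro n
    have hE := (qPochhammer_pos (a := -q) (by rwa [abs_neg]) hq.le n).ne'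
    have hPn := (qPochhammer_pos hq hq.le n).ne'
    rw [qPochhammer_two_mul_add_one, ← sq, ← qPochhammer_mul_qPochhammer_neg]
    field_simp
  have hlim := (hP.pow 2).mul (tendsto_qPochhammer_neg_sq_div hq₀ hq₁ hL hP)
  rw [tsum_div_const, show ∀ S, L ^ 2 * (S / (L * L)) = S from fun S => by field_simp] at hlim
  exact hlim.congr fun n => (hfactor n).symm

theorem stmt_13 (l : ℝ) (hl0 : 0 < l) (hl1 : l < 1) :
    ∑' n : ℕ, l ^ (n * (n+1) / 2) = ∏' n : ℕ, (1 - l^(2*n+2)) / (1 - l^(2*n+1)) := by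
  have hl : |l| < 1 := by rwa [abs_of_pos hl0]
  have hl2 : |l ^ 2| < 1 := by rw [abs_pow]; exact pow_lt_one₀ (abs_nonneg l) hl two_ne_zero
  obtain ⟨A, -, hA⟩ := exists_hasProd_one_sub_mul_pow hl2 hl2
  obtain ⟨B, hB₀, hB⟩ := exists_hasProd_one_sub_mul_pow hl hl2
  have hAB : Tendsto (fun n => qPochhammer (l ^ 2) (l ^ 2) n / qPochhammer l (l ^ 2) (n + 1))
      atTop (𝓝 (A / B)) :=
    hA.tendsto_prod_nat.div (hB.tendsto_prod_nat.comp (tendsto_add_atTop_nat 1)) hB₀.ne'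
  have hprod : HasProd (fun n : ℕ => (1 - l ^ (2 * n + 2)) / (1 - l ^ (2 * n + 1))) (A / B) := by
    have hfactor : (fun n : ℕ => (1 - l ^ (2 * n + 2)) / (1 - l ^ (2 * n + 1))) =
        fun n => (1 - l ^ 2 * (l ^ 2) ^ n) / (1 - l * (l ^ 2) ^ n) := funext fun n => by ring
    exact hfactor ▸ hA.div₀ hB hB₀.ne'
  exact (tendsto_nhds_unique (tendsto_qPochhammer_sq_div_qPochhammer hl0 hl1) hAB).trans
    hprod.tprod_eq.symm
end

section
/- Let $\lambda \in (0,1)$, let $\{Z_k\}_{k\ge 1}$ be i.i.d. standard normal random variables, $v_0 > 0$, and define $u_n = \lambda^n v_0 + (1-\lambda)\sum_{k=1}^n \lambda^{n-k} Z_k^2$ for $n \ge 0$. Then for every $\alpha > 0$, $\sup_{n \ge 0} \mathbb{E}\big[ u_n^{-\alpha} \big] < \infty$. -/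
/-!
Fix `m > 2α`. For `n ≥ m` each of the last `m` summands bounds `u_n` from below:
`u_n ≥ (1 - λ) λ^(m-1) Z_k²`, so `u_n^(-α) ≤ ∏ ((1 - λ) λ^(m-1) Z_k²)^(-α/m)` over those `k`.
By independence the expectation of the product is the `m`-th power of a single Gaussian
negative moment `E |Z|^(-2α/m)`, finite because `2α/m < 1`. For `n < m`, `u_n ≥ λ^m v₀`.
-/

open MeasureTheory ProbabilityTheory Real Finset

open Set in
theorem integrable_abs_rpow_mul_exp_neg_mul_sq {b : ℝ} (hb : 0 < b) {s : ℝ} (hs : -1 < s) :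
    Integrable fun x : ℝ => |x| ^ s * exp (-b * x ^ 2) := by
  have hpos : IntegrableOn (fun x : ℝ => |x| ^ s * exp (-b * x ^ 2)) (Ioi 0) :=
    (integrableOn_rpow_mul_exp_neg_mul_sq hb hs).congr_fun
      (fun x hx => by rw [abs_of_pos (mem_Ioi.mp hx)]) measurableSet_Ioi
  rw [← integrableOn_univ, ← Iio_union_Ici (a := (0 : ℝ)), integrableOn_union,
    integrableOn_Ici_iff_integrableOn_Ioi]
  refine ⟨?_, hpos⟩
  rw [← (Measure.measurePreserving_neg (volume : Measure ℝ)).integrableOn_comp_preimage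
      (Homeomorph.neg ℝ).measurableEmbedding]
  simpa [Function.comp_def, neg_preimage] using hpos

theorem integrable_abs_sub_rpow_gaussianReal (μ : ℝ) {v : NNReal} (hv : v ≠ 0) {s : ℝ}
    (hs : -1 < s) : Integrable (fun x => |x - μ| ^ s) (gaussianReal μ v) := by
  rw [gaussianReal_of_var_ne_zero _ hv, integrable_withDensity_iff (measurable_gaussianPDF _ _)
    (ae_of_all _ fun _ => gaussianPDF_lt_top)]
  have hb : (0 : ℝ) < (2 * (v : ℝ))⁻¹ := by positivity
  refine (((integrable_abs_rpow_mul_exp_neg_mul_sq hb hs).comp_sub_right μ).const_mul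
    (√(2 * π * v))⁻¹).congr (ae_of_all _ fun x => ?_)
  simp only [toReal_gaussianPDF, gaussianPDFReal]
  ring_nf

theorem integrable_mul_sq_rpow_neg_gaussianReal {v : NNReal} (hv : v ≠ 0) {c t : ℝ} (hc : 0 ≤ c)
    (ht : t < 1 / 2) : Integrable (fun x => (c * x ^ 2) ^ (-t)) (gaussianReal 0 v) := by
  refine ((integrable_abs_sub_rpow_gaussianReal 0 hv (s := 2 * -t) (by linarith)).const_mul
    (c ^ (-t))).congr (ae_of_all _ fun x => ?_)
  simp only [sub_zero]
  rw [mul_rpow hc (sq_nonneg x), ← sq_abs, ← rpow_natCast, ← rpow_mul (abs_nonneg x)]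
  norm_num

theorem ae_ne_of_map_eq_gaussianReal {Ω : Type*} [MeasurableSpace Ω] {μ : Measure Ω}
    {X : Ω → ℝ} (hX : Measurable X) {m : ℝ} {v : NNReal} (hv : v ≠ 0)
    (hlaw : μ.map X = gaussianReal m v) (a : ℝ) : ∀ᵐ ω ∂μ, X ω ≠ a := by
  have := nullSingletonClass_gaussianReal (μ := m) hv
  exact (ae_map_iff hX.aemeasurable (measurableSet_singleton a).compl).1
    (hlaw ▸ Measure.ae_ne _ a)

theorem lintegral_prod_comp_eq_pow {Ω ι β : Type*} [MeasurableSpace Ω] [MeasurableSpace β]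
    {μ : Measure Ω} {ν : Measure β} {Z : ι → Ω → β} (hZ : iIndepFun Z μ)
    (hmeas : ∀ k, Measurable (Z k)) (hlaw : ∀ k, μ.map (Z k) = ν) {f : β → ENNReal}
    (hf : Measurable f) (s : Finset ι) :
    ∫⁻ ω, ∏ k ∈ s, f (Z k ω) ∂μ = (∫⁻ x, f x ∂ν) ^ #s := by
  refine (lintegral_prod_eq_prod_lintegral_of_indepFun s (fun k => f ∘ Z k)
    (hZ.comp _ fun _ => hf) fun k => hf.comp (hmeas k)).trans ?_
  simp_rw [Function.comp_apply, ← lintegral_map hf (hmeas _), hlaw, prod_const]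

theorem rpow_neg_le_prod_rpow_neg {ι : Type*} {s : Finset ι} (hs : s.Nonempty) {x α : ℝ}
    (hα : 0 ≤ α) {y : ι → ℝ} (hy : ∀ k ∈ s, 0 < y k ∧ y k ≤ x) :
    x ^ (-α) ≤ ∏ k ∈ s, y k ^ (-(α / #s)) := by
  obtain ⟨k₀, hk₀⟩ := hs
  have hx : 0 < x := (hy k₀ hk₀).1.trans_le (hy k₀ hk₀).2
  have hcard : (#s : ℝ) ≠ 0 := Nat.cast_ne_zero.2 (card_ne_zero_of_mem hk₀)
  calc x ^ (-α) = ∏ _k ∈ s, x ^ (-(α / #s)) := by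
        rw [prod_const, ← rpow_mul_natCast hx.le, neg_mul, div_mul_cancel₀ _ hcard]
    _ ≤ ∏ k ∈ s, y k ^ (-(α / #s)) :=
        prod_le_prod (fun _ _ => (rpow_pos_of_pos hx _).le) fun k hk =>
          rpow_le_rpow_of_nonpos (hy k hk).1 (hy k hk).2
            (neg_nonpos.2 (by positivity))

/-- The `u_n` of the statement, evaluated along a fixed sample path `z k = Z_k ω`. -/
def ewmaVariance (l v₀ : ℝ) (z : ℕ → ℝ) (n : ℕ) : ℝ :=
  l ^ n * v₀ + (1 - l) * ∑ k ∈ Icc 1 n, l ^ (n - k) * z k ^ 2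

section ewmaVariance

variable {l v₀ : ℝ} {z : ℕ → ℝ} {n : ℕ}

theorem pow_mul_le_ewmaVariance (hl₀ : 0 ≤ l) (hl₁ : l ≤ 1) :
    l ^ n * v₀ ≤ ewmaVariance l v₀ z n :=
  le_add_of_nonneg_right <| mul_nonneg (sub_nonneg.2 hl₁) <|
    sum_nonneg fun _ _ => mul_nonneg (pow_nonneg hl₀ _) (sq_nonneg _)

theorem mul_pow_mul_sq_le_ewmaVariance (hl₀ : 0 ≤ l) (hl₁ : l ≤ 1) (hv₀ : 0 ≤ v₀) {k j : ℕ}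
    (hk : k ∈ Icc 1 n) (hj : n - k ≤ j) :
    (1 - l) * l ^ j * z k ^ 2 ≤ ewmaVariance l v₀ z n := by
  have hterm : l ^ (n - k) * z k ^ 2 ≤ ∑ i ∈ Icc 1 n, l ^ (n - i) * z i ^ 2 :=
    single_le_sum (f := fun i => l ^ (n - i) * z i ^ 2)
      (fun _ _ => mul_nonneg (pow_nonneg hl₀ _) (sq_nonneg _)) hk
  have hl : 0 ≤ 1 - l := sub_nonneg.2 hl₁
  calc (1 - l) * l ^ j * z k ^ 2 ≤ (1 - l) * l ^ (n - k) * z k ^ 2 :=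
        mul_le_mul_of_nonneg_right
          (mul_le_mul_of_nonneg_left (pow_le_pow_of_le_one hl₀ hl₁ hj) hl) (sq_nonneg _)
    _ ≤ (1 - l) * ∑ i ∈ Icc 1 n, l ^ (n - i) * z i ^ 2 := by
        rw [mul_assoc]; exact mul_le_mul_of_nonneg_left hterm hl
    _ ≤ ewmaVariance l v₀ z n := le_add_of_nonneg_left (by positivity)

theorem pow_mul_le_ewmaVariance_of_le (hl₀ : 0 ≤ l) (hl₁ : l ≤ 1) (hv₀ : 0 ≤ v₀) {m : ℕ}
    (hnm : n ≤ m) : l ^ m * v₀ ≤ ewmaVariance l v₀ z n :=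
  (mul_le_mul_of_nonneg_right (pow_le_pow_of_le_one hl₀ hl₁ hnm) hv₀).trans
    (pow_mul_le_ewmaVariance hl₀ hl₁)

theorem ewmaVariance_pos (hl₀ : 0 < l) (hl₁ : l ≤ 1) (hv₀ : 0 < v₀) :
    0 < ewmaVariance l v₀ z n :=
  (mul_pos (pow_pos hl₀ n) hv₀).trans_le (pow_mul_le_ewmaVariance hl₀.le hl₁)

theorem ewmaVariance_rpow_neg_le_prod (hl₀ : 0 < l) (hl₁ : l < 1) (hv₀ : 0 ≤ v₀) {α : ℝ}
    (hα : 0 ≤ α) {m : ℕ} (hm : 0 < m) (hmn : m ≤ n) (hz : ∀ k, z k ≠ 0) :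
    ewmaVariance l v₀ z n ^ (-α) ≤
      ∏ k ∈ Icc (n + 1 - m) n, ((1 - l) * l ^ (m - 1) * z k ^ 2) ^ (-(α / m)) := by
  have hcard : #(Icc (n + 1 - m) n) = m := by rw [Nat.card_Icc]; omega
  conv_rhs => enter [2, k, 2]; rw [← hcard]
  refine rpow_neg_le_prod_rpow_neg (nonempty_Icc.2 (by omega)) hα fun k hk => ⟨?_, ?_⟩
  · have := hz k
    have : 0 < 1 - l := by linarith
    positivity
  · rw [mem_Icc] at hk
    exact mul_pow_mul_sq_le_ewmaVariance hl₀.le hl₁.le hv₀ (mem_Icc.2 ⟨by omega, hk.2⟩) (by omega)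

end ewmaVariance

section GaussianInnovations

variable {Ω : Type*} [MeasurableSpace Ω] {μ : Measure Ω}
  {Z : ℕ → Ω → ℝ} {l v₀ α : ℝ} {n m : ℕ}

theorem integral_ewmaVariance_rpow_neg_le_of_le [IsProbabilityMeasure μ] (hl₀ : 0 < l) (hl₁ : l ≤ 1) (hv₀ : 0 < v₀)
    (hα : 0 ≤ α) (hnm : n ≤ m) :
    ∫ ω, ewmaVariance l v₀ (Z · ω) n ^ (-α) ∂μ ≤ (l ^ m * v₀) ^ (-α) := by
  calc _ ≤ ∫ _ω, (l ^ m * v₀) ^ (-α) ∂μ :=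
        integral_mono_of_nonneg
          (ae_of_all _ fun _ => (rpow_pos_of_pos (ewmaVariance_pos hl₀ hl₁ hv₀) _).le)
          (integrable_const _) (ae_of_all _ fun _ => rpow_le_rpow_of_nonpos (by positivity)
            (pow_mul_le_ewmaVariance_of_le hl₀.le hl₁ hv₀.le hnm) (by linarith))
    _ = _ := by simp

theorem integral_ewmaVariance_rpow_neg_le_of_ge (hmeas : ∀ k, Measurable (Z k))
    (hindep : iIndepFun Z μ) (hlaw : ∀ k, μ.map (Z k) = gaussianReal 0 1)
    (hl₀ : 0 < l) (hl₁ : l < 1) (hv₀ : 0 < v₀) (hα : 0 ≤ α) (hm : 2 * α < m) (hmn : m ≤ n) :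
    ∫ ω, ewmaVariance l v₀ (Z · ω) n ^ (-α) ∂μ ≤
      ((∫⁻ x, ENNReal.ofReal (((1 - l) * l ^ (m - 1) * x ^ 2) ^ (-(α / m)))
        ∂gaussianReal 0 1) ^ m).toReal := by
  have hm₀ : 0 < m := by exact_mod_cast (by linarith : (0 : ℝ) < m)
  have hfinite := (integrable_mul_sq_rpow_neg_gaussianReal one_ne_zero (t := α / m)
    (mul_nonneg (sub_nonneg.2 hl₁.le) (pow_nonneg hl₀.le (m - 1)))
    (by rw [div_lt_iff₀ (by positivity)]; linarith)).lintegral_lt_top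
  have hu : Measurable fun ω => ewmaVariance l v₀ (Z · ω) n := by
    unfold ewmaVariance; fun_prop
  have hZ0 : ∀ᵐ ω ∂μ, ∀ k, Z k ω ≠ 0 :=
    ae_all_iff.2 fun k => ae_ne_of_map_eq_gaussianReal (hmeas k) one_ne_zero (hlaw k) 0
  have hcard : #(Icc (n + 1 - m) n) = m := by rw [Nat.card_Icc]; omega
  rw [integral_eq_lintegral_of_nonneg_ae
    (ae_of_all _ fun _ => (rpow_pos_of_pos (ewmaVariance_pos hl₀ hl₁.le hv₀) _).le)
    (hu.pow_const _).aestronglyMeasurable]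
  refine ENNReal.toReal_mono (ENNReal.pow_ne_top hfinite.ne) ?_
  refine (lintegral_mono_ae (hZ0.mono fun ω hω => ?_)).trans_eq
    ((lintegral_prod_comp_eq_pow hindep hmeas hlaw
      (f := fun x => ENNReal.ofReal (((1 - l) * l ^ (m - 1) * x ^ 2) ^ (-(α / m))))
      (by fun_prop) (Icc (n + 1 - m) n)).trans
      (by rw [hcard]))
  rw [← ENNReal.ofReal_prod_of_nonneg fun _ _ => by positivity]
  exact ENNReal.ofReal_le_ofReal (ewmaVariance_rpow_neg_le_prod hl₀ hl₁ hv₀.le hα hm₀ hmn hω)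

end GaussianInnovations

theorem stmt_18 {Ω : Type*} [MeasureSpace Ω] (μ : Measure Ω) [IsProbabilityMeasure μ]
    (Z : ℕ → Ω → ℝ) (hmeas : ∀ k, Measurable (Z k))
    (hindep : iIndepFun Z μ)
    (hdist : ∀ k, μ.map (Z k) = gaussianReal 0 1)
    (l : ℝ) (hl0 : 0 < l) (hl1 : l < 1) (v0 : ℝ) (hv0 : 0 < v0) :
    ∀ α > (0:ℝ), ∃ C : ℝ, ∀ n : ℕ,
      (∫ ω, (l^n * v0 + (1 - l) * ∑ k ∈ Finset.Icc 1 n, l^(n-k) * (Z k ω)^2) ^ (-α) ∂μ)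
        ≤ C := by
  intro α hα
  obtain ⟨m, hm⟩ := exists_nat_gt (2 * α)
  refine ⟨max ((l ^ m * v0) ^ (-α))
    ((∫⁻ x, ENNReal.ofReal (((1 - l) * l ^ (m - 1) * x ^ 2) ^ (-(α / m)))
      ∂gaussianReal 0 1) ^ m).toReal, fun n => ?_⟩
  change ∫ ω, ewmaVariance l v0 (Z · ω) n ^ (-α) ∂μ ≤ _
  rcases le_total n m with hnm | hmn
  · exact le_max_of_le_left
      (integral_ewmaVariance_rpow_neg_le_of_le hl0 hl1.le hv0 hα.le hnm)
  · exact le_max_of_le_right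
      (integral_ewmaVariance_rpow_neg_le_of_ge hmeas hindep hdist hl0 hl1 hv0 hα.le hm hmn)
end

section
/- Let $\lambda \in (0,1)$, let $\{Z_k\}_{k\ge 1}$ be i.i.d. standard normal random variables, $v_0 > 0$, and $u_n = \lambda^n v_0 + (1-\lambda)\sum_{k=1}^n \lambda^{n-k} Z_k^2$. Then $\lim_{n\to\infty} \mathbb{E}\big[ u_n^{-1} \big] = \int_0^\infty \prod_{k=0}^\infty \big[1 + 2(1-\lambda)\lambda^k t\big]^{-1/2} \, dt$, and this limit is finite. -/
/-!
Writing `u⁻¹ = ∫₀^∞ e^{-ut} dt` and swapping the integrals (Tonelli), `𝔼[u_n⁻¹]` is the integral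
over `t > 0` of the Laplace transform `𝔼[e^{-t u_n}]`, which independence and the Gaussian
identity `𝔼[e^{-aZ²}] = (1 + 2a)^{-1/2}` evaluate as `e^{-λⁿ v₀ t} ∏_{j<n} (1 + 2(1-λ)λʲ t)^{-1/2}`.
As `n → ∞` these converge to the infinite product (convergent since `∑ λʲ < ∞`), and for `n ≥ 3`
they are dominated by `(1 + 2(1-λ)λ² t)^{-3/2}`, which is integrable on `(0, ∞)`; dominated
convergence gives both the limit and the integrability of the limit.
-/

open MeasureTheory ProbabilityTheory Real Filter Set Topology

lemma integral_exp_neg_mul_Ioi {b : ℝ} (hb : 0 < b) :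
    ∫ t in Ioi (0:ℝ), exp (-(b * t)) = b⁻¹ := by
  simpa only [mul_zero, integral_exp_neg_Ioi_zero, smul_eq_mul, mul_one]
    using integral_comp_mul_left_Ioi (fun t => exp (-t)) 0 hb

lemma integral_inv_eq_integral_Ioi_integral_exp {Ω : Type*} [MeasurableSpace Ω]
    {μ : Measure Ω} [IsFiniteMeasure μ] {U : Ω → ℝ} (hU : Measurable U) (hpos : ∀ ω, 0 < U ω) :
    ∫ ω, (U ω)⁻¹ ∂μ = ∫ t in Ioi (0:ℝ), ∫ ω, exp (-(U ω * t)) ∂μ := by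
  set f : Ω → ℝ → ℝ := fun ω t => exp (-(U ω * t))
  have hf : Measurable (Function.uncurry f) := by fun_prop
  have hinv (ω : Ω) : ENNReal.ofReal (U ω)⁻¹ = ∫⁻ t in Ioi (0:ℝ), ENNReal.ofReal (f ω t) := by
    have hint : IntegrableOn (f ω) (Ioi 0) := by
      simpa only [neg_mul] using exp_neg_integrableOn_Ioi 0 (hpos ω)
    rw [← integral_exp_neg_mul_Ioi (hpos ω),
      ofReal_integral_eq_lintegral_ofReal hint (ae_of_all _ fun t => (exp_pos _).le)]
  have hexp {t : ℝ} (ht : t ∈ Ioi (0:ℝ)) :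
      ∫⁻ ω, ENNReal.ofReal (f ω t) ∂μ = ENNReal.ofReal (∫ ω, f ω t ∂μ) := by
    refine (ofReal_integral_eq_lintegral_ofReal ?_ (ae_of_all _ fun ω => (exp_pos _).le)).symm
    refine (integrable_const 1).mono' (by fun_prop) (ae_of_all _ fun ω => ?_)
    rw [norm_of_nonneg (exp_pos _).le, exp_le_one_iff, neg_nonpos]
    exact (mul_pos (hpos ω) ht).le
  rw [integral_eq_lintegral_of_nonneg_ae (ae_of_all _ fun ω => (inv_pos.2 (hpos ω)).le)
      (by fun_prop), integral_eq_lintegral_of_nonneg_ae (f := fun t => ∫ ω, f ω t ∂μ)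
      (ae_of_all _ fun t => integral_nonneg fun ω => (exp_pos _).le)
      hf.stronglyMeasurable.integral_prod_left'.aestronglyMeasurable, lintegral_congr hinv,
    lintegral_lintegral_swap (f := fun ω t => ENNReal.ofReal (f ω t))
      (ENNReal.measurable_ofReal.comp hf).aemeasurable,
    setLIntegral_congr_fun measurableSet_Ioi fun t ht => hexp ht]

lemma integral_exp_neg_mul_sq_gaussianReal {a : ℝ} (ha : 0 < 1 + 2 * a) :
    ∫ x, exp (-(a * x ^ 2)) ∂gaussianReal 0 1 = (1 + 2 * a) ^ (-(1:ℝ)/2) := by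
  have hpdf (x : ℝ) : gaussianPDFReal 0 1 x • exp (-(a * x ^ 2))
      = (√(2 * π))⁻¹ * exp (-((1 + 2 * a) / 2) * x ^ 2) := by
    rw [gaussianPDFReal, smul_eq_mul, mul_assoc, ← exp_add]
    push_cast
    ring_nf
  rw [integral_gaussianReal_eq_integral_smul one_ne_zero]
  simp_rw [hpdf]
  rw [integral_const_mul, integral_gaussian, ← sqrt_inv, ← sqrt_mul (by positivity),
    show (2 * π)⁻¹ * (π / ((1 + 2 * a) / 2)) = (1 + 2 * a)⁻¹ by field_simp,
    sqrt_inv, sqrt_eq_rpow, ← rpow_neg ha.le, neg_div]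

lemma integral_exp_neg_sum_mul_sq_of_gaussian {Ω : Type*} [MeasurableSpace Ω] {μ : Measure Ω}
    {Z : ℕ → Ω → ℝ} (hmeas : ∀ k, Measurable (Z k)) (hindep : iIndepFun Z μ)
    (hdist : ∀ k, μ.map (Z k) = gaussianReal 0 1) (s : Finset ℕ) {c : ℕ → ℝ}
    (hc : ∀ k ∈ s, 0 < 1 + 2 * c k) :
    ∫ ω, exp (-∑ k ∈ s, c k * Z k ω ^ 2) ∂μ = ∏ k ∈ s, (1 + 2 * c k) ^ (-(1:ℝ)/2) := by
  set X : ℕ → Ω → ℝ := fun k ω => c k * Z k ω ^ 2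
  have hX : iIndepFun X μ := hindep.comp (fun k x => c k * x ^ 2) fun k => by fun_prop
  have hmgf : ∫ ω, exp (-∑ k ∈ s, c k * Z k ω ^ 2) ∂μ = mgf (∑ k ∈ s, X k) μ (-1) := by
    simp [mgf, X, Finset.sum_apply]
  rw [hmgf, hX.mgf_sum (fun k => by fun_prop)]
  refine Finset.prod_congr rfl fun k hk => ?_
  rw [← integral_exp_neg_mul_sq_gaussianReal (hc k hk), ← hdist k,
    integral_map (hmeas k).aemeasurable (by fun_prop)]
  simp [X, mgf]

lemma prod_Icc_one_sub_eq_prod_range {M : Type*} [CommMonoid M] (f : ℕ → M) (n : ℕ) :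
    ∏ k ∈ Finset.Icc 1 n, f (n - k) = ∏ j ∈ Finset.range n, f j := by
  rw [← Finset.Ico_add_one_right_eq_Icc, Finset.prod_Ico_reflect f 1 le_rfl, Finset.range_eq_Ico]
  simp

lemma integral_exp_neg_mul_ewma_sq {Ω : Type*} [MeasurableSpace Ω] {μ : Measure Ω}
    {Z : ℕ → Ω → ℝ} (hmeas : ∀ k, Measurable (Z k)) (hindep : iIndepFun Z μ)
    (hdist : ∀ k, μ.map (Z k) = gaussianReal 0 1) {l : ℝ} (hl0 : 0 ≤ l) (hl1 : l ≤ 1)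
    (v0 : ℝ) (n : ℕ) {t : ℝ} (ht : 0 ≤ t) :
    ∫ ω, exp (-((l ^ n * v0 + (1 - l) * ∑ k ∈ Finset.Icc 1 n, l ^ (n - k) * Z k ω ^ 2) * t)) ∂μ
      = exp (-(l ^ n * v0 * t))
          * ∏ j ∈ Finset.range n, (1 + 2 * (1 - l) * l ^ j * t) ^ (-(1:ℝ)/2) := by
  have hsplit (ω : Ω) :
      exp (-((l ^ n * v0 + (1 - l) * ∑ k ∈ Finset.Icc 1 n, l ^ (n - k) * Z k ω ^ 2) * t))
        = exp (-(l ^ n * v0 * t))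
          * exp (-∑ k ∈ Finset.Icc 1 n, (1 - l) * l ^ (n - k) * t * Z k ω ^ 2) := by
    have hsum : (1 - l) * (∑ k ∈ Finset.Icc 1 n, l ^ (n - k) * Z k ω ^ 2) * t
        = ∑ k ∈ Finset.Icc 1 n, (1 - l) * l ^ (n - k) * t * Z k ω ^ 2 := by
      rw [Finset.mul_sum, Finset.sum_mul]
      exact Finset.sum_congr rfl fun k _ => by ring
    rw [add_mul, hsum, neg_add, exp_add]
  simp_rw [hsplit]
  have := sub_nonneg.2 hl1
  rw [integral_const_mul,
    integral_exp_neg_sum_mul_sq_of_gaussian hmeas hindep hdist _ fun k _ => by positivity]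
  congr 1
  simpa only [mul_assoc] using
    prod_Icc_one_sub_eq_prod_range (fun j => (1 + 2 * (1 - l) * l ^ j * t) ^ (-(1:ℝ)/2)) n

lemma integral_inv_ewma_sq_eq {Ω : Type*} [MeasurableSpace Ω] {μ : Measure Ω}
    {Z : ℕ → Ω → ℝ} (hmeas : ∀ k, Measurable (Z k)) (hindep : iIndepFun Z μ)
    (hdist : ∀ k, μ.map (Z k) = gaussianReal 0 1) {l : ℝ} (hl0 : 0 < l) (hl1 : l ≤ 1)
    {v0 : ℝ} (hv0 : 0 < v0) (n : ℕ) :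
    ∫ ω, (l ^ n * v0 + (1 - l) * ∑ k ∈ Finset.Icc 1 n, l ^ (n - k) * Z k ω ^ 2)⁻¹ ∂μ
      = ∫ t in Ioi (0:ℝ),
          exp (-(l ^ n * v0 * t))
            * ∏ j ∈ Finset.range n, (1 + 2 * (1 - l) * l ^ j * t) ^ (-(1:ℝ)/2) := by
  have := hindep.isProbabilityMeasure
  have := sub_nonneg.2 hl1
  have hpos (ω : Ω) :
      0 < l ^ n * v0 + (1 - l) * ∑ k ∈ Finset.Icc 1 n, l ^ (n - k) * Z k ω ^ 2 := by
    positivity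
  rw [integral_inv_eq_integral_Ioi_integral_exp (by fun_prop) hpos]
  exact setIntegral_congr_fun measurableSet_Ioi fun t ht =>
    integral_exp_neg_mul_ewma_sq hmeas hindep hdist hl0.le hl1 v0 n (le_of_lt ht)

lemma multipliable_one_add_rpow {ι : Type*} {f : ι → ℝ} (hf : Summable f)
    (hpos : ∀ i, 0 < 1 + f i) (p : ℝ) : Multipliable fun i => (1 + f i) ^ p :=
  Real.multipliable_of_summable_log (fun i => rpow_pos_of_pos (hpos i) p)
    (((Real.summable_log_one_add_of_summable hf).mul_left p).congr
      fun i => (log_rpow (hpos i) p).symm)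

lemma prod_range_one_add_mul_pow_rpow_le {c r t : ℝ} (hc : 0 ≤ c) (hr0 : 0 ≤ r) (hr1 : r ≤ 1)
    (ht : 0 ≤ t) {n : ℕ} (hn : 3 ≤ n) :
    ∏ j ∈ Finset.range n, (1 + c * r ^ j * t) ^ (-(1:ℝ)/2)
      ≤ (1 + c * r ^ 2 * t) ^ (-(3:ℝ)/2) := by
  set f : ℕ → ℝ := fun j => (1 + c * r ^ j * t) ^ (-(1:ℝ)/2)
  have hf0 (j : ℕ) : 0 ≤ f j := rpow_nonneg (by positivity) _
  have hf1 (j : ℕ) : f j ≤ 1 :=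
    rpow_le_one_of_one_le_of_nonpos (le_add_of_nonneg_right (by positivity)) (by norm_num)
  have hf2 {j : ℕ} (hj : j ≤ 2) : f j ≤ f 2 := by
    refine rpow_le_rpow_of_nonpos (by positivity) ?_ (by norm_num)
    gcongr 1 + c * ?_ * t
    exact pow_le_pow_of_le_one hr0 hr1 hj
  calc ∏ j ∈ Finset.range n, f j
      ≤ ∏ j ∈ Finset.range 3, f j :=
        Finset.prod_le_prod_of_subset_of_le_one (Finset.range_subset_range.2 hn)
          (fun j _ => hf0 j) fun j _ _ => hf1 j
    _ ≤ ∏ _j ∈ Finset.range 3, f 2 :=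
        Finset.prod_le_prod (fun j _ => hf0 j) fun j hj => hf2 (by simp at hj; omega)
    _ = (1 + c * r ^ 2 * t) ^ (-(3:ℝ)/2) := by
        rw [Finset.prod_const, Finset.card_range, ← rpow_natCast, ← rpow_mul (by positivity)]
        norm_num

lemma integrableOn_Ioi_one_add_mul_rpow {b s : ℝ} (hb : 0 < b) (hs : s < -1) :
    IntegrableOn (fun t => (1 + b * t) ^ s) (Ioi 0) := by
  have := integrableOn_add_rpow_Ioi_of_lt hs (by simp : -1 < b * 0)
  rw [← integrableOn_Ioi_comp_mul_left_iff _ _ hb] at this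
  simpa only [add_comm] using this

lemma tendsto_exp_neg_pow_mul_prod_range {l : ℝ} (hl0 : 0 ≤ l) (hl1 : l < 1) (v0 t : ℝ)
    {f : ℕ → ℝ} (hf : Multipliable f) :
    Tendsto (fun n => exp (-(l ^ n * v0 * t)) * ∏ j ∈ Finset.range n, f j) atTop
      (𝓝 (∏' j, f j)) := by
  have hexp : Tendsto (fun n => exp (-(l ^ n * v0 * t))) atTop (𝓝 1) := by
    simpa using
      (((tendsto_pow_atTop_nhds_zero_of_lt_one hl0 hl1).mul_const v0).mul_const t).neg.rexp
  simpa using hexp.mul hf.hasProd.tendsto_prod_nat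

lemma tendsto_integral_and_integrable_of_dominated {α E : Type*} [MeasurableSpace α]
    [NormedAddCommGroup E] [NormedSpace ℝ E] {μ : Measure α} {F : ℕ → α → E} {f : α → E}
    {g : α → ℝ} (hF : ∀ n, AEStronglyMeasurable (F n) μ) (hg : Integrable g μ)
    (hbound : ∀ᶠ n in atTop, ∀ᵐ a ∂μ, ‖F n a‖ ≤ g a)
    (hlim : ∀ᵐ a ∂μ, Tendsto (fun n => F n a) atTop (𝓝 (f a))) :
    Tendsto (fun n => ∫ a, F n a ∂μ) atTop (𝓝 (∫ a, f a ∂μ)) ∧ Integrable f μ := by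
  refine ⟨tendsto_integral_filter_of_dominated_convergence g (Eventually.of_forall hF) hbound hg
    hlim, hg.mono' (aestronglyMeasurable_of_tendsto_ae _ hF hlim) ?_⟩
  obtain ⟨N, hN⟩ := eventually_atTop.1 hbound
  filter_upwards [hlim, ae_all_iff.2 fun n => hN (n + N) (by omega)] with a hFa hFg
  exact le_of_tendsto ((hFa.comp (tendsto_add_atTop_nat N)).norm) (Eventually.of_forall hFg)

theorem stmt_19_general {Ω : Type*} [MeasureSpace Ω] (μ : Measure Ω)
    (Z : ℕ → Ω → ℝ) (hmeas : ∀ k, Measurable (Z k))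
    (hindep : iIndepFun Z μ)
    (hdist : ∀ k, μ.map (Z k) = gaussianReal 0 1)
    (l : ℝ) (hl0 : 0 < l) (hl1 : l < 1) (v0 : ℝ) (hv0 : 0 < v0) :
    Filter.Tendsto
      (fun n => ∫ ω, (l^n * v0 + (1 - l) * ∑ k ∈ Finset.Icc 1 n, l^(n-k) * (Z k ω)^2)⁻¹ ∂μ)
      atTop
      (nhds (∫ t in Set.Ioi (0:ℝ), ∏' k : ℕ, (1 + 2 * (1 - l) * l^k * t) ^ (-(1:ℝ)/2))) ∧
    IntegrableOn (fun t => ∏' k : ℕ, (1 + 2 * (1 - l) * l^k * t) ^ (-(1:ℝ)/2))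
      (Set.Ioi (0:ℝ)) := by
  have hc : 0 ≤ 2 * (1 - l) := by linarith
  have hmult {t : ℝ} (ht : 0 ≤ t) :
      Multipliable fun k : ℕ => (1 + 2 * (1 - l) * l ^ k * t) ^ (-(1:ℝ)/2) :=
    multipliable_one_add_rpow (((summable_geometric_of_lt_one hl0.le hl1).mul_left _).mul_right t)
      (fun k => by positivity) _
  have hdom : ∀ᶠ n in atTop, ∀ᵐ t ∂volume.restrict (Ioi (0:ℝ)),
      ‖exp (-(l ^ n * v0 * t))
          * ∏ j ∈ Finset.range n, (1 + 2 * (1 - l) * l ^ j * t) ^ (-(1:ℝ)/2)‖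
        ≤ (1 + 2 * (1 - l) * l ^ 2 * t) ^ (-(3:ℝ)/2) := by
    filter_upwards [eventually_ge_atTop 3] with n hn
    filter_upwards [ae_restrict_mem measurableSet_Ioi] with t (ht : 0 < t)
    rw [norm_of_nonneg (by positivity)]
    refine (mul_le_of_le_one_left (by positivity) ?_).trans
      (prod_range_one_add_mul_pow_rpow_le hc hl0.le hl1.le ht.le hn)
    exact exp_le_one_iff.2 (neg_nonpos.2 (by positivity))
  obtain ⟨hlim, hint⟩ := tendsto_integral_and_integrable_of_dominated (fun n => by fun_prop)
    (integrableOn_Ioi_one_add_mul_rpow (by positivity) (by norm_num)) hdom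
    (ae_restrict_of_forall_mem measurableSet_Ioi fun t ht =>
      tendsto_exp_neg_pow_mul_prod_range hl0.le hl1 v0 t (hmult (le_of_lt ht)))
  refine ⟨?_, hint⟩
  simpa only [integral_inv_ewma_sq_eq hmeas hindep hdist hl0 hl1.le hv0] using hlim

theorem stmt_19 {Ω : Type*} [MeasureSpace Ω] (μ : Measure Ω) [IsProbabilityMeasure μ]
    (Z : ℕ → Ω → ℝ) (hmeas : ∀ k, Measurable (Z k))
    (hindep : iIndepFun Z μ)
    (hdist : ∀ k, μ.map (Z k) = gaussianReal 0 1)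
    (l : ℝ) (hl0 : 0 < l) (hl1 : l < 1) (v0 : ℝ) (hv0 : 0 < v0) :
    Filter.Tendsto
      (fun n => ∫ ω, (l^n * v0 + (1 - l) * ∑ k ∈ Finset.Icc 1 n, l^(n-k) * (Z k ω)^2)⁻¹ ∂μ)
      atTop
      (nhds (∫ t in Set.Ioi (0:ℝ), ∏' k : ℕ, (1 + 2 * (1 - l) * l^k * t) ^ (-(1:ℝ)/2))) ∧
    IntegrableOn (fun t => ∏' k : ℕ, (1 + 2 * (1 - l) * l^k * t) ^ (-(1:ℝ)/2))
      (Set.Ioi (0:ℝ)) :=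
  stmt_19_general μ Z hmeas hindep hdist l hl0 hl1 v0 hv0
end
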